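/- arXiv:1304.7637 — 7 statements merged into one kernel-verified Lean document; each statement's English description precedes it below -/
import Mathlib

section
/- Let α > 0 and let {M_t : t ∈ ℤ} be an ℝ^d-valued process with ‖M₀‖ = 1 a.s. such that for all integers s, t ≥ 0, all i ∈ ℤ, and all bounded continuous f : (ℝ^d)^{s+t+1} → ℝ satisfying f(y_{−s}, …, y_t) = 0 whenever y₀ = 0, one has E[f(M_{−s−i}, …, M_{t−i})] = E[f(M_{−s}/‖M_i‖, …, M_t/‖M_i‖) ‖M_i‖^α 1_{{M_i ≠ 0}}]. Then for all integers s, t ≥ 0 and all bounded (Borel) measurable f : (ℝ^d)^{s+t+1} → ℝ satisfying f(y_{−s}, …, y_t) = 0 whenever y_{−s} = 0, one has E[f(M_{−s}, …, M_t)] = E[f(M₀/‖M_s‖, …, M_{s+t}/‖M_s‖) ‖M_s‖^α 1_{{M_s ≠ 0}}]. -/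
open MeasureTheory Filter Set
open scoped ENNReal NNReal Topology Classical

noncomputable section

/-- `ℝ^d` with the Euclidean norm. -/
abbrev Ed (d : ℕ) : Type := EuclideanSpace ℝ (Fin d)

private lemma integrable_of_bdd {X : Type*} [MeasurableSpace X] {μ : Measure X}
    [IsFiniteMeasure μ] {g : X → ℝ} (hm : AEStronglyMeasurable g μ) {C : ℝ}
    (hb : ∀ x, |g x| ≤ C) : Integrable g μ :=
  (integrable_const C).mono' hm (Eventually.of_forall fun x => by
    simpa [Real.norm_eq_abs] using hb x)

/-- Two finite Borel measures on a metric space that integrate equally all bounded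
continuous functions vanishing on a nonempty closed set `F` agree on `Fᶜ`. -/
private lemma restrict_ext_of_integral_eq {X : Type*} [MeasurableSpace X] [MetricSpace X]
    [BorelSpace X]
    {μ₁ μ₂ : Measure X} [IsFiniteMeasure μ₁] [IsFiniteMeasure μ₂]
    {F : Set X} (hF : IsClosed F) (hFne : F.Nonempty)
    (h : ∀ g : X → ℝ, Continuous g → (∃ C, ∀ y, |g y| ≤ C) → (∀ y ∈ F, g y = 0) →
      ∫ y, g y ∂μ₁ = ∫ y, g y ∂μ₂) :
    μ₁.restrict Fᶜ = μ₂.restrict Fᶜ := by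
  have hFc : MeasurableSet (Fᶜ) := hF.measurableSet.compl
  apply ext_of_forall_lintegral_eq_of_IsFiniteMeasure
  intro g
  have hgc : Continuous fun y => (g y : ℝ) := NNReal.continuous_coe.comp g.continuous
  set C : ℝ := (nndist g 0 : ℝ) with hCdef
  have hb : ∀ y, (g y : ℝ) ≤ C := fun y => by
    exact_mod_cast BoundedContinuousFunction.NNReal.upper_bound g y
  set φ : ℕ → X → ℝ := fun n y => min (n * Metric.infDist y F) 1 with hφdef
  have hφ0 : ∀ n y, 0 ≤ φ n y := fun n y =>
    le_min (mul_nonneg (Nat.cast_nonneg n) Metric.infDist_nonneg) zero_le_one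
  have hφ1 : ∀ n y, φ n y ≤ 1 := fun n y => min_le_right _ _
  have hφc : ∀ n, Continuous (φ n) := fun n =>
    (continuous_const.mul (Metric.continuous_infDist_pt F)).min continuous_const
  have habs : ∀ n y, |(g y : ℝ) * φ n y| ≤ C := by
    intro n y
    rw [abs_mul, abs_of_nonneg (g y).coe_nonneg, abs_of_nonneg (hφ0 n y)]
    calc (g y : ℝ) * φ n y ≤ (g y : ℝ) * 1 := by
          have := (g y).coe_nonneg; nlinarith [hφ1 n y]
      _ = (g y : ℝ) := mul_one _
      _ ≤ C := hb y
  have heq : ∀ n, ∫ y, (g y : ℝ) * φ n y ∂μ₁ = ∫ y, (g y : ℝ) * φ n y ∂μ₂ := fun n =>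
    h _ (hgc.mul (hφc n)) ⟨C, habs n⟩ (fun y hy => by
      simp [hφdef, Metric.infDist_zero_of_mem hy])
  have hlim : ∀ y, Tendsto (fun n => (g y : ℝ) * φ n y) atTop
      (𝓝 (Set.indicator Fᶜ (fun y => (g y : ℝ)) y)) := by
    intro y
    by_cases hy : y ∈ F
    · rw [Set.indicator_of_notMem (by simpa using hy)]
      have hz : ∀ n : ℕ, (g y : ℝ) * φ n y = 0 := fun n => by
        simp [hφdef, Metric.infDist_zero_of_mem hy]
      simpa [hz] using (tendsto_const_nhds : Tendsto (fun _ : ℕ => (0:ℝ)) atTop (𝓝 0))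
    · have hpos : 0 < Metric.infDist y F := (hF.notMem_iff_infDist_pos hFne).1 hy
      rw [Set.indicator_of_mem (by simpa using hy)]
      have hev : ∀ᶠ n : ℕ in atTop, (g y : ℝ) * φ n y = (g y : ℝ) := by
        obtain ⟨N, hN⟩ := exists_nat_ge (Metric.infDist y F)⁻¹
        filter_upwards [eventually_ge_atTop N] with n hn
        have h1 : (1:ℝ) ≤ n * Metric.infDist y F := by
          rw [← inv_mul_cancel₀ hpos.ne']
          gcongr
          exact hN.trans (by exact_mod_cast hn)
        simp [hφdef, min_eq_right h1]
      exact Tendsto.congr' (hev.mono fun n hn => hn.symm) tendsto_const_nhds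
  have hdom : ∀ (μ : Measure X), IsFiniteMeasure μ →
      Tendsto (fun n => ∫ y, (g y : ℝ) * φ n y ∂μ) atTop
        (𝓝 (∫ y, Set.indicator Fᶜ (fun y => (g y : ℝ)) y ∂μ)) := by
    intro μ hμ
    refine tendsto_integral_of_dominated_convergence (fun _ => C)
      (fun n => ((hgc.mul (hφc n)).aestronglyMeasurable)) (integrable_const _)
      (fun n => Eventually.of_forall fun y => by
        rw [Real.norm_eq_abs]; exact habs n y)
      (Eventually.of_forall hlim)
  have key : ∫ y, Set.indicator Fᶜ (fun y => (g y : ℝ)) y ∂μ₁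
      = ∫ y, Set.indicator Fᶜ (fun y => (g y : ℝ)) y ∂μ₂ := by
    have t1 := hdom μ₁ inferInstance
    have t2 := hdom μ₂ inferInstance
    simp_rw [heq] at t1
    exact tendsto_nhds_unique t1 t2
  rw [integral_indicator hFc, integral_indicator hFc] at key
  have hint1 : Integrable (fun y => (g y : ℝ)) (μ₁.restrict Fᶜ) :=
    integrable_of_bdd hgc.aestronglyMeasurable
      (fun y => by rw [abs_of_nonneg (g y).coe_nonneg]; exact hb y)
  have hint2 : Integrable (fun y => (g y : ℝ)) (μ₂.restrict Fᶜ) :=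
    integrable_of_bdd hgc.aestronglyMeasurable
      (fun y => by rw [abs_of_nonneg (g y).coe_nonneg]; exact hb y)
  rw [lintegral_coe_eq_integral _ hint1, lintegral_coe_eq_integral _ hint2]
  exact congrArg ENNReal.ofReal key

private lemma integral_eq_of_restrict_eq {X : Type*} [MeasurableSpace X]
    {μ₁ μ₂ : Measure X} {F : Set X} (hFc : MeasurableSet Fᶜ)
    (hres : μ₁.restrict Fᶜ = μ₂.restrict Fᶜ)
    {f : X → ℝ} (hf0 : ∀ y ∈ F, f y = 0) :
    ∫ y, f y ∂μ₁ = ∫ y, f y ∂μ₂ := by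
  have hind : f = Set.indicator Fᶜ f := by
    funext y
    by_cases hy : y ∈ F
    · rw [Set.indicator_of_notMem (by simpa using hy), hf0 y hy]
    · rw [Set.indicator_of_mem (by simpa using hy)]
  rw [hind, integral_indicator hFc, integral_indicator hFc, hres]


private def Phi {d : ℕ} {Ω : Type*} (M : ℤ → Ω → Ed d) (s t : ℕ) :
    Ω → (Fin (s + t + 1) → Ed d) :=
  fun ω j => M (-(s : ℤ) + j.1) ω

private def Psi {d : ℕ} {Ω : Type*} (M : ℤ → Ω → Ed d) (s t : ℕ) :
    Ω → (Fin (s + t + 1) → Ed d) :=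
  fun ω j => ‖M (s : ℤ) ω‖⁻¹ • M (j.1 : ℤ) ω

private def wgt {d : ℕ} {Ω : Type*} (M : ℤ → Ω → Ed d) (s : ℕ) (α : ℝ) : Ω → ℝ≥0 :=
  fun ω => ‖M (s : ℤ) ω‖₊ ^ α

private def reidx {d : ℕ} (s t : ℕ) (g : (Fin (s + t + 1) → Ed d) → ℝ) :
    (Fin (0 + (s + t) + 1) → Ed d) → ℝ :=
  fun y => g (fun j => y ⟨j.1, by omega⟩)

private def tst (d : ℕ) (n : ℕ) (α : ℝ) : (Fin (0 + 0 + 1) → Ed d) → ℝ :=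
  fun y => min ((n : ℝ) * ‖y ⟨0, by omega⟩‖ ^ α) 1

set_option maxHeartbeats 1000000 in
/-- Proposition 3.2 (time-change formula for bounded measurable functions).  A tuple
`(y_{-s}, …, y_t)` is encoded as a map `Fin (s+t+1) → ℝ^d`, coordinate `j`
corresponding to time `-s + j`.  The hypothesis is the time-change identity for
bounded continuous functions vanishing when the coordinate `y₀` vanishes (for every
shift `i ∈ ℤ`); the conclusion is the identity for bounded measurable functions
vanishing when the coordinate `y_{-s}` vanishes. -/
theorem time_change_measurable
    {d : ℕ} {Ω : Type*} [MeasurableSpace Ω] (ν : Measure Ω) [IsProbabilityMeasure ν]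
    {α : ℝ} (hα : 0 < α)
    (M : ℤ → Ω → Ed d) (hM : ∀ t : ℤ, Measurable (M t))
    (hM0 : ∀ᵐ ω ∂ν, ‖M 0 ω‖ = 1)
    (hTC : ∀ (s t : ℕ) (i : ℤ) (f : (Fin (s + t + 1) → Ed d) → ℝ),
      Continuous f → (∃ C : ℝ, ∀ y, |f y| ≤ C) →
      (∀ y : Fin (s + t + 1) → Ed d, y ⟨s, by omega⟩ = 0 → f y = 0) →
      ∫ ω, f (fun j => M (-(s : ℤ) - i + j.1) ω) ∂ν
        = ∫ ω, (if M i ω ≠ 0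
            then f (fun j => ‖M i ω‖⁻¹ • M (-(s : ℤ) + j.1) ω) * ‖M i ω‖ ^ α
            else 0) ∂ν) :
    ∀ (s t : ℕ) (f : (Fin (s + t + 1) → Ed d) → ℝ),
      Measurable f → (∃ C : ℝ, ∀ y, |f y| ≤ C) →
      (∀ y : Fin (s + t + 1) → Ed d, y ⟨0, by omega⟩ = 0 → f y = 0) →
      ∫ ω, f (fun j => M (-(s : ℤ) + j.1) ω) ∂ν
        = ∫ ω, (if M s ω ≠ 0
            then f (fun j => ‖M s ω‖⁻¹ • M (j.1 : ℤ) ω) * ‖M s ω‖ ^ α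
            else 0) ∂ν := by
  intro s t f hfm hfb hf0
  have hΦm : Measurable (Phi M s t) := measurable_pi_lambda _ fun j => hM _
  have hΨm : Measurable (Psi M s t) := measurable_pi_lambda _ fun j =>
    ((hM s).norm.inv).smul (hM _)
  have hwm : Measurable (wgt M s α) := ((hM s).nnnorm).pow measurable_const
  -- pointwise identity for the right-hand side
  have hkey : ∀ (g : (Fin (s + t + 1) → Ed d) → ℝ) (ω : Ω),
      (if M (s : ℤ) ω ≠ 0 then g (Psi M s t ω) * ‖M (s : ℤ) ω‖ ^ α else 0)
        = (wgt M s α ω : ℝ) * g (Psi M s t ω) := by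
    intro g ω
    by_cases hms : M (s : ℤ) ω = 0
    · have hw0 : wgt M s α ω = 0 := by
        simp [wgt, hms, NNReal.zero_rpow hα.ne']
      simp [hms, hw0]
    · rw [if_pos hms]
      have hcoe : (wgt M s α ω : ℝ) = ‖M (s : ℤ) ω‖ ^ α := by
        simp [wgt, NNReal.coe_rpow, coe_nnnorm]
      rw [hcoe, mul_comm]
  -- finiteness of the weighted measure
  have hw1 : ∫⁻ ω, (wgt M s α ω : ℝ≥0∞) ∂ν ≤ 1 := by
    have hbase : ∀ n : ℕ, ∫ ω, min (n : ℝ) (‖M (s : ℤ) ω‖ ^ α) ∂ν ≤ 1 := by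
      intro n
      have hFc : Continuous (tst d n α) := by
        refine Continuous.min ?_ continuous_const
        exact continuous_const.mul
          (((continuous_apply _).norm).rpow_const (fun y => Or.inr hα.le))
      have hFb : ∀ y, |tst d n α y| ≤ 1 := by
        intro y
        rw [abs_le]
        refine ⟨?_, min_le_right _ _⟩
        have : (0:ℝ) ≤ tst d n α y := le_min (by positivity) zero_le_one
        linarith
      have hF0 : ∀ y : Fin (0 + 0 + 1) → Ed d, y ⟨0, by omega⟩ = 0 → tst d n α y = 0 := by
        intro y hy
        have hy0 : y 0 = 0 := hy
        simp [tst, hy0, Real.zero_rpow hα.ne', min_eq_left zero_le_one]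
      have key := hTC 0 0 (s : ℤ) (tst d n α) hFc ⟨1, hFb⟩ hF0
      -- the right-hand side equals the truncated power a.e.
      have hae : ∀ᵐ ω ∂ν,
          (if M (s : ℤ) ω ≠ 0
            then tst d n α (fun j => ‖M (s : ℤ) ω‖⁻¹ • M (-((0 : ℕ) : ℤ) + j.1) ω) * ‖M (s : ℤ) ω‖ ^ α
            else 0) = min (n : ℝ) (‖M (s : ℤ) ω‖ ^ α) := by
        filter_upwards [hM0] with ω h0
        by_cases hms : M (s : ℤ) ω = 0
        · simp [hms, Real.zero_rpow hα.ne',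
            min_eq_right (by positivity : (0:ℝ) ≤ (n:ℝ))]
        · rw [if_pos hms]
          have hr : 0 < ‖M (s : ℤ) ω‖ := norm_pos_iff.2 hms
          have hidx : (-((0 : ℕ) : ℤ) + (((⟨0, by omega⟩ : Fin (0+0+1)).1 : ℕ) : ℤ)) = 0 := by
            simp
          have hnrm : ‖‖M (s : ℤ) ω‖⁻¹ • M (-((0 : ℕ) : ℤ) + ((⟨0, by omega⟩ : Fin (0+0+1)).1 : ℤ)) ω‖
              = ‖M (s : ℤ) ω‖⁻¹ := by
            rw [hidx, norm_smul, Real.norm_eq_abs, abs_of_nonneg (inv_nonneg.2 hr.le), h0, mul_one]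
          simp only [tst]
          rw [hnrm, Real.inv_rpow (norm_nonneg _), min_mul_of_nonneg _ _ (Real.rpow_nonneg (norm_nonneg _) α), one_mul,
            mul_assoc, inv_mul_cancel₀ (Real.rpow_pos_of_pos hr α).ne', mul_one]
      rw [integral_congr_ae hae] at key
      rw [← key]
      have hΦ'm : Measurable fun ω => (fun j : Fin (0 + 0 + 1) => M (-((0 : ℕ) : ℤ) - (s : ℤ) + j.1) ω) :=
        measurable_pi_lambda _ fun j => hM _
      have hint : Integrable (fun ω => tst d n α (fun j => M (-((0 : ℕ) : ℤ) - (s : ℤ) + j.1) ω)) ν :=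
        integrable_of_bdd (hFc.measurable.comp hΦ'm).aestronglyMeasurable
          (fun ω => hFb _)
      calc ∫ ω, tst d n α (fun j => M (-((0 : ℕ) : ℤ) - (s : ℤ) + j.1) ω) ∂ν
          ≤ ∫ _ω, (1 : ℝ) ∂ν := by
            refine integral_mono hint (integrable_const 1) fun ω => ?_
            exact min_le_right _ _
        _ = 1 := by simp
    -- monotone convergence
    have hGm : ∀ n : ℕ, Measurable (fun ω => ENNReal.ofReal (min (n : ℝ) (‖M (s : ℤ) ω‖ ^ α))) :=
      fun n => (measurable_const.min (((hM s).norm).pow measurable_const)).ennreal_ofReal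
    have hmono : Monotone (fun (n : ℕ) (ω : Ω) => ENNReal.ofReal (min (n : ℝ) (‖M (s : ℤ) ω‖ ^ α))) := by
      intro a b hab
      intro ω
      exact ENNReal.ofReal_le_ofReal (min_le_min (by exact_mod_cast hab) le_rfl)
    have hsup : ∀ ω, (⨆ n : ℕ, ENNReal.ofReal (min (n : ℝ) (‖M (s : ℤ) ω‖ ^ α))) = (wgt M s α ω : ℝ≥0∞) := by
      intro ω
      have hcoe : ((wgt M s α ω : ℝ≥0) : ℝ≥0∞) = ENNReal.ofReal (‖M (s : ℤ) ω‖ ^ α) := by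
        rw [ENNReal.ofReal]
        refine ENNReal.coe_inj.2 (NNReal.coe_injective ?_)
        rw [wgt]
        rw [NNReal.coe_rpow, coe_nnnorm,
          Real.coe_toNNReal _ (Real.rpow_nonneg (norm_nonneg _) _)]
      rw [hcoe]
      apply le_antisymm
      · exact iSup_le fun n => ENNReal.ofReal_le_ofReal (min_le_right _ _)
      · obtain ⟨n, hn⟩ := exists_nat_ge (‖M (s : ℤ) ω‖ ^ α)
        exact le_iSup_of_le n (by rw [min_eq_right hn])
    calc ∫⁻ ω, (wgt M s α ω : ℝ≥0∞) ∂ν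
        = ∫⁻ ω, ⨆ n : ℕ, ENNReal.ofReal (min (n : ℝ) (‖M (s : ℤ) ω‖ ^ α)) ∂ν := by
          refine lintegral_congr fun ω => (hsup ω).symm
      _ = ⨆ n : ℕ, ∫⁻ ω, ENNReal.ofReal (min (n : ℝ) (‖M (s : ℤ) ω‖ ^ α)) ∂ν :=
          lintegral_iSup hGm hmono
      _ ≤ 1 := by
          refine iSup_le fun n => ?_
          have hintn : Integrable (fun ω => min (n : ℝ) (‖M (s : ℤ) ω‖ ^ α)) ν := by
            refine integrable_of_bdd
              ((measurable_const.min (((hM s).norm).pow measurable_const)).aestronglyMeasurable)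
              (C := (n : ℝ)) fun ω => ?_
            rw [abs_of_nonneg (le_min (by positivity) (Real.rpow_nonneg (norm_nonneg _) α))]
            exact min_le_left _ _
          rw [← ofReal_integral_eq_lintegral_ofReal hintn
            (Eventually.of_forall fun ω => le_min (by positivity) (Real.rpow_nonneg (norm_nonneg _) α))]
          exact ENNReal.ofReal_le_one.2 (hbase n)
  -- the two measures
  haveI hfinw : IsFiniteMeasure (ν.withDensity (fun ω => (wgt M s α ω : ℝ≥0∞))) :=
    isFiniteMeasure_withDensity (lt_of_le_of_lt hw1 ENNReal.one_lt_top).ne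
  set μ₁ : Measure (Fin (s + t + 1) → Ed d) := ν.map (Phi M s t) with hμ₁
  set μ₂ : Measure (Fin (s + t + 1) → Ed d) :=
    (ν.withDensity (fun ω => (wgt M s α ω : ℝ≥0∞))).map (Psi M s t) with hμ₂
  haveI hμ₁f : IsFiniteMeasure μ₁ := Measure.isFiniteMeasure_map _ _
  haveI hμ₂f : IsFiniteMeasure μ₂ := Measure.isFiniteMeasure_map _ _
  set F0 : Set (Fin (s + t + 1) → Ed d) := {y | y ⟨0, by omega⟩ = 0} with hF0def
  have hF0closed : IsClosed F0 := isClosed_eq (continuous_apply _) continuous_const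
  have hF0ne : F0.Nonempty := ⟨0, rfl⟩
  have hmap₁ : ∀ g : (Fin (s + t + 1) → Ed d) → ℝ, AEStronglyMeasurable g μ₁ →
      ∫ y, g y ∂μ₁ = ∫ ω, g (Phi M s t ω) ∂ν := fun g hg => integral_map hΦm.aemeasurable hg
  have hmap₂ : ∀ g : (Fin (s + t + 1) → Ed d) → ℝ, AEStronglyMeasurable g μ₂ →
      ∫ y, g y ∂μ₂ = ∫ ω, (wgt M s α ω : ℝ) * g (Psi M s t ω) ∂ν := by
    intro g hg
    rw [hμ₂, integral_map hΨm.aemeasurable hg, integral_withDensity_eq_integral_smul hwm]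
    simp_rw [NNReal.smul_def, smul_eq_mul]
  -- the continuous case
  have hcont : ∀ g : (Fin (s + t + 1) → Ed d) → ℝ, Continuous g → (∃ C, ∀ y, |g y| ≤ C) →
      (∀ y ∈ F0, g y = 0) → ∫ y, g y ∂μ₁ = ∫ y, g y ∂μ₂ := by
    intro g hgc hgb hg0
    have hg'c : Continuous (reidx s t g) := hgc.comp (continuous_pi fun j => continuous_apply _)
    have hg'b : ∃ C, ∀ y, |reidx s t g y| ≤ C := hgb.imp fun C hC y => hC _
    have hg'0 : ∀ y : Fin (0 + (s + t) + 1) → Ed d, y ⟨0, by omega⟩ = 0 → reidx s t g y = 0 := by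
      intro y hy
      exact hg0 _ hy
    have key := hTC 0 (s + t) (s : ℤ) (reidx s t g) hg'c hg'b hg'0
    have hL : ∀ ω, reidx s t g (fun j => M (-((0 : ℕ) : ℤ) - (s : ℤ) + j.1) ω) = g (Phi M s t ω) := by
      intro ω
      simp only [reidx, Phi]
      congr 1
      funext j
      show M (-((0:ℕ):ℤ) - (s:ℤ) + (j.1:ℤ)) ω = M (-(s:ℤ) + (j.1:ℤ)) ω
      have harg : (-((0:ℕ):ℤ) - (s:ℤ) + (j.1:ℤ)) = (-(s:ℤ) + (j.1:ℤ)) := by omega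
      rw [harg]
    have hR : ∀ ω, (if M (s : ℤ) ω ≠ 0
        then reidx s t g (fun j => ‖M (s : ℤ) ω‖⁻¹ • M (-((0 : ℕ) : ℤ) + j.1) ω) * ‖M (s : ℤ) ω‖ ^ α
        else 0) = (wgt M s α ω : ℝ) * g (Psi M s t ω) := by
      intro ω
      have hg'Ψ : reidx s t g (fun j => ‖M (s : ℤ) ω‖⁻¹ • M (-((0 : ℕ) : ℤ) + j.1) ω) = g (Psi M s t ω) := by
        simp only [reidx, Psi]
        congr 1
        funext j
        show ‖M (s:ℤ) ω‖⁻¹ • M (-((0:ℕ):ℤ) + (j.1:ℤ)) ω = ‖M (s:ℤ) ω‖⁻¹ • M ((j.1:ℕ):ℤ) ω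
        have harg : (-((0:ℕ):ℤ) + (j.1:ℤ)) = ((j.1:ℕ):ℤ) := by omega
        rw [harg]
      rw [hg'Ψ]
      exact hkey g ω
    calc ∫ y, g y ∂μ₁ = ∫ ω, g (Phi M s t ω) ∂ν := hmap₁ g hgc.aestronglyMeasurable
      _ = ∫ ω, reidx s t g (fun j => M (-((0 : ℕ) : ℤ) - (s : ℤ) + j.1) ω) ∂ν :=
          (integral_congr_ae (Eventually.of_forall hL)).symm
      _ = ∫ ω, (if M (s : ℤ) ω ≠ 0
            then reidx s t g (fun j => ‖M (s : ℤ) ω‖⁻¹ • M (-((0 : ℕ) : ℤ) + j.1) ω) * ‖M (s : ℤ) ω‖ ^ α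
            else 0) ∂ν := key
      _ = ∫ ω, (wgt M s α ω : ℝ) * g (Psi M s t ω) ∂ν := integral_congr_ae (Eventually.of_forall hR)
      _ = ∫ y, g y ∂μ₂ := (hmap₂ g hgc.aestronglyMeasurable).symm
  have hres := restrict_ext_of_integral_eq hF0closed hF0ne hcont
  have hfinal : ∫ y, f y ∂μ₁ = ∫ y, f y ∂μ₂ :=
    integral_eq_of_restrict_eq hF0closed.measurableSet.compl hres (fun y hy => hf0 y hy)
  calc ∫ ω, f (fun j => M (-(s : ℤ) + j.1) ω) ∂ν
      = ∫ y, f y ∂μ₁ := (hmap₁ f hfm.aestronglyMeasurable).symm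
    _ = ∫ y, f y ∂μ₂ := hfinal
    _ = ∫ ω, (wgt M s α ω : ℝ) * f (Psi M s t ω) ∂ν := hmap₂ f hfm.aestronglyMeasurable
    _ = ∫ ω, (if M (s : ℤ) ω ≠ 0
          then f (fun j => ‖M (s : ℤ) ω‖⁻¹ • M (j.1 : ℤ) ω) * ‖M (s : ℤ) ω‖ ^ α
          else 0) ∂ν :=
        (integral_congr_ae (Eventually.of_forall fun ω => hkey f ω)).symm
end
end

section
/- Let α > 0 and P ∈ M_α with adjoint measure P*. Then P* ∈ M_α, i.e. ∫ 1_{{m* ≠ 0}} 1_S(m*/‖m*‖) ‖m*‖^α P*(ds*, dm*) ≤ P*(S × ℝ^d) for every Borel set S ⊆ S^{d−1}. -/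
open MeasureTheory Filter Set
open scoped ENNReal Topology Classical

noncomputable section

/-- The unit sphere `S^{d-1}` of `ℝ^d`. -/
def unitSphere (d : ℕ) : Set (Ed d) := Metric.sphere 0 1

/-- `∫ 1_{m ≠ 0} 1_S(m/‖m‖) ‖m‖^α P(ds, dm)`: the mass that `P` sends to the set of
directions `S ⊆ S^{d-1}`, weighted by `‖m‖^α`. -/
def dirMass (d : ℕ) (α : ℝ) (P : Measure (Ed d × Ed d)) (S : Set (Ed d)) : ℝ≥0∞ :=
  ∫⁻ p, Set.indicator {p : Ed d × Ed d | p.2 ≠ 0 ∧ ‖p.2‖⁻¹ • p.2 ∈ S}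
    (fun p => ENNReal.ofReal (‖p.2‖ ^ α)) p ∂P

/-- Membership in the class `M_α` of admissible distributions: probability measures
on `S^{d-1} × ℝ^d` (encoded as measures on `ℝ^d × ℝ^d` whose first marginal is
concentrated on the unit sphere) such that
`∫ 1_{m ≠ 0} 1_S(m/‖m‖) ‖m‖^α P(ds, dm) ≤ P(S × ℝ^d)` for every Borel `S ⊆ S^{d-1}`. -/
structure MemMalpha (d : ℕ) (α : ℝ) (P : Measure (Ed d × Ed d)) : Prop where
  prob : IsProbabilityMeasure P
  sphere : P {p : Ed d × Ed d | ‖p.1‖ = 1} = 1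
  adm : ∀ S : Set (Ed d), MeasurableSet S → S ⊆ unitSphere d →
    dirMass d α P S ≤ P (S ×ˢ (univ : Set (Ed d)))

/-- `Q` is the adjoint measure `P*` of `P ∈ M_α`: a Borel measure on
`S^{d-1} × ℝ^d` satisfying
`P*(S × {0}) = P(S × ℝ^d) − ∫ 1_{m ≠ 0} 1_S(m/‖m‖) ‖m‖^α P(ds, dm)` for Borel
`S ⊆ S^{d-1}`, and
`P*(E) = ∫ 1_{m ≠ 0} 1_E(m/‖m‖, s/‖m‖) ‖m‖^α P(ds, dm)` for Borel
`E ⊆ S^{d-1} × (ℝ^d \ {0})`. -/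
structure IsAdjoint (d : ℕ) (α : ℝ) (P Q : Measure (Ed d × Ed d)) : Prop where
  supp : Q {p : Ed d × Ed d | ‖p.1‖ ≠ 1} = 0
  eq_zero : ∀ S : Set (Ed d), MeasurableSet S → S ⊆ unitSphere d →
    Q (S ×ˢ ({0} : Set (Ed d))) = P (S ×ˢ (univ : Set (Ed d))) - dirMass d α P S
  eq_pos : ∀ E : Set (Ed d × Ed d), MeasurableSet E →
    E ⊆ (unitSphere d) ×ˢ ({0}ᶜ : Set (Ed d)) →
    Q E = ∫⁻ p, Set.indicator
        {p : Ed d × Ed d | p.2 ≠ 0 ∧ (‖p.2‖⁻¹ • p.2, ‖p.2‖⁻¹ • p.1) ∈ E}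
        (fun p => ENNReal.ofReal (‖p.2‖ ^ α)) p ∂P

section AuxAdjoint

variable {d : ℕ} {α : ℝ}

lemma adj_measurable_w (hα : 0 < α) :
    Measurable (fun p : Ed d × Ed d => ENNReal.ofReal (‖p.2‖ ^ α)) :=
  ENNReal.measurable_ofReal.comp
    ((Real.continuous_rpow_const hα.le).measurable.comp measurable_snd.norm)

lemma adj_measurable_T :
    Measurable (fun p : Ed d × Ed d => ((‖p.2‖⁻¹ • p.2, ‖p.2‖⁻¹ • p.1) : Ed d × Ed d)) :=
  (measurable_snd.norm.inv.smul measurable_snd).prodMk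
    (measurable_snd.norm.inv.smul measurable_fst)

lemma adj_measurableSet_B : MeasurableSet {p : Ed d × Ed d | ‖p.1‖ = 1} :=
  measurable_fst.norm (measurableSet_singleton 1)

lemma adj_aeP (P : Measure (Ed d × Ed d)) [IsProbabilityMeasure P]
    (hsph : P {p : Ed d × Ed d | ‖p.1‖ = 1} = 1) : ∀ᵐ p ∂P, ‖p.1‖ = 1 := by
  rw [ae_iff]
  have : P {p : Ed d × Ed d | ‖p.1‖ = 1}ᶜ = 0 := by
    rw [measure_compl adj_measurableSet_B (measure_ne_top _ _), hsph, measure_univ, tsub_self]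
  simpa [Set.compl_setOf] using this

/-- The pointwise identity for the weighted integrand. -/
lemma adj_pointwise (hα : 0 < α) {S : Set (Ed d)} (p : Ed d × Ed d) (hp : ‖p.1‖ = 1) :
    ENNReal.ofReal (‖p.2‖ ^ α) *
      Set.indicator
        ({p : Ed d × Ed d | ‖p.1‖ = 1} ∩ {p : Ed d × Ed d | p.2 ≠ 0 ∧ ‖p.2‖⁻¹ • p.2 ∈ S})
        (fun p => ENNReal.ofReal (‖p.2‖ ^ α)) ((‖p.2‖⁻¹ • p.2, ‖p.2‖⁻¹ • p.1) : Ed d × Ed d)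
    = Set.indicator {q : Ed d × Ed d | q.2 ≠ 0 ∧ q.1 ∈ S} 1 p := by
  have hp1 : p.1 ≠ 0 := by intro h; rw [h] at hp; simp at hp
  by_cases h2 : p.2 = 0
  · have hw0 : ENNReal.ofReal (‖p.2‖ ^ α) = 0 := by
      rw [h2]; simp [Real.zero_rpow hα.ne']
    rw [hw0, zero_mul, Set.indicator_of_notMem (fun h => h.1 h2)]
  · have hn : ‖p.2‖ ≠ 0 := norm_ne_zero_iff.mpr h2
    have hTn : ‖(‖p.2‖⁻¹ • p.2 : Ed d)‖ = 1 := by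
      rw [norm_smul, norm_inv, norm_norm, inv_mul_cancel₀ hn]
    have hT2 : (‖p.2‖⁻¹ • p.1 : Ed d) ≠ 0 := smul_ne_zero (inv_ne_zero hn) hp1
    have hT2n : ‖(‖p.2‖⁻¹ • p.1 : Ed d)‖ = ‖p.2‖⁻¹ := by
      rw [norm_smul, norm_inv, norm_norm, hp, mul_one]
    have hTnorm : ‖(‖p.2‖⁻¹ • p.1 : Ed d)‖⁻¹ • (‖p.2‖⁻¹ • p.1 : Ed d) = p.1 := by
      rw [hT2n, inv_inv, smul_smul, mul_inv_cancel₀ hn, one_smul]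
    by_cases hmem : p.1 ∈ S
    · have hmemT : ((‖p.2‖⁻¹ • p.2, ‖p.2‖⁻¹ • p.1) : Ed d × Ed d) ∈
          {p : Ed d × Ed d | ‖p.1‖ = 1} ∩ {p : Ed d × Ed d | p.2 ≠ 0 ∧ ‖p.2‖⁻¹ • p.2 ∈ S} :=
        ⟨hTn, hT2, by rw [hTnorm]; exact hmem⟩
      have hmemR : p ∈ {q : Ed d × Ed d | q.2 ≠ 0 ∧ q.1 ∈ S} := ⟨h2, hmem⟩
      rw [Set.indicator_of_mem hmemT, Set.indicator_of_mem hmemR]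
      show ENNReal.ofReal (‖p.2‖ ^ α) * ENNReal.ofReal (‖(‖p.2‖⁻¹ • p.1 : Ed d)‖ ^ α) = 1
      rw [hT2n, ← ENNReal.ofReal_mul (Real.rpow_nonneg (norm_nonneg _) _),
          ← Real.mul_rpow (norm_nonneg _) (inv_nonneg.mpr (norm_nonneg _)),
          mul_inv_cancel₀ hn, Real.one_rpow, ENNReal.ofReal_one]
    · rw [Set.indicator_of_notMem (fun h => hmem (hTnorm ▸ h.2.2)), mul_zero,
          Set.indicator_of_notMem (fun h => hmem h.2)]

lemma adj_dirMass_le (hα : 0 < α) (P Q : Measure (Ed d × Ed d))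
    (hP : MemMalpha d α P) (hQ : IsAdjoint d α P Q)
    {S : Set (Ed d)} (hS : MeasurableSet S) :
    dirMass d α Q S ≤ P (S ×ˢ (univ : Set (Ed d))) := by
  haveI := hP.prob
  have hw : Measurable (fun p : Ed d × Ed d => ENNReal.ofReal (‖p.2‖ ^ α)) := adj_measurable_w hα
  have hT : Measurable (fun p : Ed d × Ed d => ((‖p.2‖⁻¹ • p.2, ‖p.2‖⁻¹ • p.1) : Ed d × Ed d)) :=
    adj_measurable_T
  have hA : MeasurableSet {p : Ed d × Ed d | p.2 ≠ 0 ∧ ‖p.2‖⁻¹ • p.2 ∈ S} :=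
    ((measurable_snd (measurableSet_singleton 0)).compl).inter
      ((measurable_snd.norm.inv.smul measurable_snd) hS)
  have hs : MeasurableSet
      ({p : Ed d × Ed d | ‖p.1‖ = 1} ∩ {p : Ed d × Ed d | p.2 ≠ 0 ∧ ‖p.2‖⁻¹ • p.2 ∈ S}) :=
    adj_measurableSet_B.inter hA
  have hG : MeasurableSet (unitSphere d ×ˢ ({0}ᶜ : Set (Ed d))) :=
    Metric.isClosed_sphere.measurableSet.prod (measurableSet_singleton 0).compl
  have hsG : ({p : Ed d × Ed d | ‖p.1‖ = 1} ∩ {p : Ed d × Ed d | p.2 ≠ 0 ∧ ‖p.2‖⁻¹ • p.2 ∈ S})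
      ⊆ unitSphere d ×ˢ ({0}ᶜ : Set (Ed d)) := by
    rintro ⟨a, b⟩ ⟨h1, h2, -⟩
    exact ⟨by simpa [unitSphere, mem_sphere_zero_iff_norm] using h1, h2⟩
  have haeQ : ∀ᵐ p ∂Q, ‖p.1‖ = 1 := by rw [ae_iff]; exact hQ.supp
  have haeP : ∀ᵐ p ∂P, ‖p.1‖ = 1 := adj_aeP P hP.sphere
  have hQG : Q.restrict (unitSphere d ×ˢ ({0}ᶜ : Set (Ed d)))
      = (Measure.map (fun p : Ed d × Ed d => ((‖p.2‖⁻¹ • p.2, ‖p.2‖⁻¹ • p.1) : Ed d × Ed d))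
          (P.withDensity (fun p => ENNReal.ofReal (‖p.2‖ ^ α)))).restrict
          (unitSphere d ×ˢ ({0}ᶜ : Set (Ed d))) := by
    ext U hU
    rw [Measure.restrict_apply hU, Measure.restrict_apply hU,
        Measure.map_apply hT (hU.inter hG), withDensity_apply _ (hT (hU.inter hG)),
        ← lintegral_indicator (hT (hU.inter hG)),
        hQ.eq_pos _ (hU.inter hG) Set.inter_subset_right]
    refine lintegral_congr fun p => ?_
    by_cases h2 : p.2 = 0
    · have hw0 : ENNReal.ofReal (‖p.2‖ ^ α) = 0 := by
        rw [h2]; simp [Real.zero_rpow hα.ne']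
      simp [Set.indicator_apply, hw0]
    · simp [Set.indicator_apply, h2, Set.mem_preimage]
  have hress : Q.restrict
        ({p : Ed d × Ed d | ‖p.1‖ = 1} ∩ {p : Ed d × Ed d | p.2 ≠ 0 ∧ ‖p.2‖⁻¹ • p.2 ∈ S})
      = (Measure.map (fun p : Ed d × Ed d => ((‖p.2‖⁻¹ • p.2, ‖p.2‖⁻¹ • p.1) : Ed d × Ed d))
          (P.withDensity (fun p => ENNReal.ofReal (‖p.2‖ ^ α)))).restrict
          ({p : Ed d × Ed d | ‖p.1‖ = 1} ∩ {p : Ed d × Ed d | p.2 ≠ 0 ∧ ‖p.2‖⁻¹ • p.2 ∈ S}) := by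
    have h1 := Measure.restrict_restrict (μ := Q) (t := unitSphere d ×ˢ ({0}ᶜ : Set (Ed d))) hs
    have h2 := Measure.restrict_restrict
      (μ := Measure.map (fun p : Ed d × Ed d => ((‖p.2‖⁻¹ • p.2, ‖p.2‖⁻¹ • p.1) : Ed d × Ed d))
        (P.withDensity (fun p => ENNReal.ofReal (‖p.2‖ ^ α))))
      (t := unitSphere d ×ˢ ({0}ᶜ : Set (Ed d))) hs
    rw [Set.inter_eq_self_of_subset_left hsG] at h1 h2
    rw [← h1, ← h2, hQG]
  have hmeas2 : MeasurableSet {q : Ed d × Ed d | q.2 ≠ 0 ∧ q.1 ∈ S} :=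
    ((measurable_snd (measurableSet_singleton 0)).compl).inter (measurable_fst hS)
  calc dirMass d α Q S
      = ∫⁻ p, Set.indicator
          ({p : Ed d × Ed d | ‖p.1‖ = 1} ∩ {p : Ed d × Ed d | p.2 ≠ 0 ∧ ‖p.2‖⁻¹ • p.2 ∈ S})
          (fun p => ENNReal.ofReal (‖p.2‖ ^ α)) p ∂Q := by
        refine lintegral_congr_ae (haeQ.mono fun p hp => ?_)
        by_cases hmem : p ∈ {p : Ed d × Ed d | p.2 ≠ 0 ∧ ‖p.2‖⁻¹ • p.2 ∈ S}
        · have hmem2 : p ∈ {p : Ed d × Ed d | ‖p.1‖ = 1}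
              ∩ {p : Ed d × Ed d | p.2 ≠ 0 ∧ ‖p.2‖⁻¹ • p.2 ∈ S} := ⟨hp, hmem⟩
          rw [Set.indicator_of_mem hmem, Set.indicator_of_mem hmem2]
        · rw [Set.indicator_of_notMem hmem, Set.indicator_of_notMem (fun h => hmem h.2)]
    _ = ∫⁻ p, Set.indicator
          ({p : Ed d × Ed d | ‖p.1‖ = 1} ∩ {p : Ed d × Ed d | p.2 ≠ 0 ∧ ‖p.2‖⁻¹ • p.2 ∈ S})
          (fun p => ENNReal.ofReal (‖p.2‖ ^ α)) p
          ∂(Measure.map (fun p : Ed d × Ed d => ((‖p.2‖⁻¹ • p.2, ‖p.2‖⁻¹ • p.1) : Ed d × Ed d))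
            (P.withDensity (fun p => ENNReal.ofReal (‖p.2‖ ^ α)))) := by
        rw [lintegral_indicator hs, lintegral_indicator hs, hress]
    _ = ∫⁻ p, Set.indicator
          ({p : Ed d × Ed d | ‖p.1‖ = 1} ∩ {p : Ed d × Ed d | p.2 ≠ 0 ∧ ‖p.2‖⁻¹ • p.2 ∈ S})
          (fun p => ENNReal.ofReal (‖p.2‖ ^ α)) ((‖p.2‖⁻¹ • p.2, ‖p.2‖⁻¹ • p.1) : Ed d × Ed d)
          ∂(P.withDensity (fun p => ENNReal.ofReal (‖p.2‖ ^ α))) :=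
        lintegral_map (hw.indicator hs) hT
    _ = ∫⁻ p, ((fun p : Ed d × Ed d => ENNReal.ofReal (‖p.2‖ ^ α)) *
          (fun p : Ed d × Ed d => Set.indicator
            ({p : Ed d × Ed d | ‖p.1‖ = 1} ∩ {p : Ed d × Ed d | p.2 ≠ 0 ∧ ‖p.2‖⁻¹ • p.2 ∈ S})
            (fun p => ENNReal.ofReal (‖p.2‖ ^ α))
            ((‖p.2‖⁻¹ • p.2, ‖p.2‖⁻¹ • p.1) : Ed d × Ed d))) p ∂P :=
        lintegral_withDensity_eq_lintegral_mul P hw ((hw.indicator hs).comp hT)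
    _ = ∫⁻ p, Set.indicator {q : Ed d × Ed d | q.2 ≠ 0 ∧ q.1 ∈ S} 1 p ∂P :=
        lintegral_congr_ae (haeP.mono fun p hp => adj_pointwise hα p hp)
    _ = P {q : Ed d × Ed d | q.2 ≠ 0 ∧ q.1 ∈ S} := lintegral_indicator_one hmeas2
    _ ≤ P (S ×ˢ (univ : Set (Ed d))) := measure_mono (fun q hq => ⟨hq.2, trivial⟩)

end AuxAdjoint

/-- Lemma 4.1(iii): the adjoint measure of `P ∈ M_α` again belongs to `M_α`; in
particular `∫ 1_{m* ≠ 0} 1_S(m*/‖m*‖) ‖m*‖^α P*(ds*, dm*) ≤ P*(S × ℝ^d)` for every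
Borel `S ⊆ S^{d-1}`. -/
theorem adjoint_mem_Malpha
    {d : ℕ} {α : ℝ} (hα : 0 < α) (P Q : Measure (Ed d × Ed d))
    (hP : MemMalpha d α P) (hQ : IsAdjoint d α P Q) :
    MemMalpha d α Q := by
  haveI := hP.prob
  have hB : MeasurableSet {p : Ed d × Ed d | ‖p.1‖ = 1} := adj_measurableSet_B
  have hSph : MeasurableSet (unitSphere d) := Metric.isClosed_sphere.measurableSet
  have hBeq : {p : Ed d × Ed d | ‖p.1‖ = 1} = unitSphere d ×ˢ (univ : Set (Ed d)) := by
    ext p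
    simp [unitSphere, Set.mem_prod, mem_sphere_zero_iff_norm]
  have haeP : ∀ᵐ p ∂P, ‖p.1‖ = 1 := adj_aeP P hP.sphere
  -- the measure of `S ×ˢ {0}ᶜ` under `Q`
  have key1 : ∀ S : Set (Ed d), MeasurableSet S → S ⊆ unitSphere d →
      Q (S ×ˢ ({0}ᶜ : Set (Ed d))) = dirMass d α P S := by
    intro S hS hsub
    rw [hQ.eq_pos _ (hS.prod (measurableSet_singleton 0).compl) (Set.prod_mono hsub subset_rfl)]
    refine (lintegral_congr_ae (haeP.mono fun p hp => ?_)).symm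
    have hp1 : p.1 ≠ 0 := by intro h; rw [h] at hp; simp at hp
    by_cases h2 : p.2 = 0
    · simp [Set.indicator_apply, h2]
    · have h21 : (‖p.2‖⁻¹ • p.1 : Ed d) ≠ 0 :=
        smul_ne_zero (inv_ne_zero (norm_ne_zero_iff.mpr h2)) hp1
      simp [Set.indicator_apply, h2, Set.mem_prod, h21, hp1]
  -- `Q` and `P` agree on vertical strips
  have key2 : ∀ S : Set (Ed d), MeasurableSet S → S ⊆ unitSphere d →
      Q (S ×ˢ (univ : Set (Ed d))) = P (S ×ˢ (univ : Set (Ed d))) := by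
    intro S hS hsub
    have hsplit : S ×ˢ (univ : Set (Ed d))
        = S ×ˢ ({0} : Set (Ed d)) ∪ S ×ˢ ({0}ᶜ : Set (Ed d)) := by
      rw [← Set.prod_union, Set.union_compl_self]
    have hdisj : Disjoint (S ×ˢ ({0} : Set (Ed d))) (S ×ˢ ({0}ᶜ : Set (Ed d))) := by
      refine Set.disjoint_left.mpr ?_
      rintro ⟨a, b⟩ ⟨-, hb⟩ ⟨-, hb'⟩
      exact hb' hb
    rw [hsplit, measure_union hdisj (hS.prod (measurableSet_singleton 0).compl),
        hQ.eq_zero S hS hsub, key1 S hS hsub, tsub_add_cancel_of_le (hP.adm S hS hsub),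
        ← hsplit]
  have hQB : Q {p : Ed d × Ed d | ‖p.1‖ = 1} = 1 := by
    rw [hBeq, key2 _ hSph subset_rfl, ← hBeq, hP.sphere]
  have hQBc : Q {p : Ed d × Ed d | ‖p.1‖ = 1}ᶜ = 0 := by
    simpa [Set.compl_setOf] using hQ.supp
  have hQuniv : Q univ = 1 := by
    rw [← measure_add_measure_compl hB, hQB, hQBc, add_zero]
  refine ⟨⟨hQuniv⟩, hQB, fun S hS hsub => ?_⟩
  rw [key2 S hS hsub]
  exact adj_dirMass_le hα P Q hP hQ hS
end
end

section
/- Let α > 0 and P ∈ M_α with adjoint measure P*. Then the adjoint of P* is P, i.e. (P*)* = P as measures on S^{d−1} × ℝ^d. -/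
open MeasureTheory Filter Set
open scoped ENNReal Topology Classical

noncomputable section

def phi (d : ℕ) : Ed d × Ed d → Ed d × Ed d := fun p => (‖p.2‖⁻¹ • p.2, ‖p.2‖⁻¹ • p.1)
lemma measurable_phi {d : ℕ} : Measurable (phi d) := by unfold phi; fun_prop
def w (d : ℕ) (α : ℝ) : Ed d × Ed d → ℝ≥0∞ := fun p => ENNReal.ofReal (‖p.2‖ ^ α)
lemma measurable_w {d : ℕ} {α : ℝ} : Measurable (w d α) := by unfold w; fun_prop
lemma msZ {d : ℕ} : MeasurableSet {p : Ed d × Ed d | p.2 ≠ 0} :=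
  ((measurableSet_singleton 0).preimage measurable_snd).compl
lemma norm_phi_fst {d : ℕ} {p : Ed d × Ed d} (h2 : p.2 ≠ 0) : ‖(phi d p).1‖ = 1 := by
  have hm : ‖p.2‖ ≠ 0 := norm_ne_zero_iff.2 h2
  simp [phi, norm_smul, abs_of_nonneg (inv_nonneg.2 (norm_nonneg p.2)), inv_mul_cancel₀ hm]

lemma msSph {d : ℕ} : MeasurableSet {p : Ed d × Ed d | ‖p.1‖ = 1} :=
  (measurableSet_singleton (1:ℝ)).preimage measurable_fst.norm

variable {d : ℕ} {α : ℝ}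

def nu (d : ℕ) (α : ℝ) (P : Measure (Ed d × Ed d)) : Measure (Ed d × Ed d) :=
  (P.withDensity ({p : Ed d × Ed d | p.2 ≠ 0}.indicator (w d α))).map (phi d)

lemma nu_apply (P : Measure (Ed d × Ed d)) {E : Set (Ed d × Ed d)} (hE : MeasurableSet E) :
    nu d α P E = ∫⁻ p, Set.indicator {p : Ed d × Ed d | p.2 ≠ 0 ∧ phi d p ∈ E} (w d α) p ∂P := by
  rw [nu, Measure.map_apply measurable_phi hE,
    withDensity_apply _ (measurable_phi hE),
    ← lintegral_indicator (measurable_phi hE), Set.indicator_indicator]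
  rw [show (phi d ⁻¹' E ∩ {p : Ed d × Ed d | p.2 ≠ 0}) = {p : Ed d × Ed d | p.2 ≠ 0 ∧ phi d p ∈ E}
    from by ext p; simp [and_comm]]

lemma nu_bad (P : Measure (Ed d × Ed d)) :
    nu d α P {p : Ed d × Ed d | ‖p.1‖ ≠ 1} = 0 := by
  rw [show {p : Ed d × Ed d | ‖p.1‖ ≠ 1} = {p : Ed d × Ed d | ‖p.1‖ = 1}ᶜ from rfl,
    nu_apply P msSph.compl]
  have hset : {p : Ed d × Ed d | p.2 ≠ 0 ∧ phi d p ∈ {p : Ed d × Ed d | ‖p.1‖ = 1}ᶜ} = ∅ := by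
    ext p
    simp only [Set.mem_setOf_eq, Set.mem_compl_iff, Set.mem_empty_iff_false, iff_false, not_and]
    intro h2
    simp [norm_phi_fst h2]
  rw [hset]
  simp


lemma ms_unitSphere {d : ℕ} : MeasurableSet (unitSphere d) :=
  Metric.isClosed_sphere.measurableSet

lemma msG {d : ℕ} : MeasurableSet (unitSphere d ×ˢ ({0}ᶜ : Set (Ed d))) :=
  ms_unitSphere.prod (measurableSet_singleton 0).compl

lemma mem_G_iff {d : ℕ} {p : Ed d × Ed d} :
    p ∈ unitSphere d ×ˢ ({0}ᶜ : Set (Ed d)) ↔ ‖p.1‖ = 1 ∧ p.2 ≠ 0 := by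
  simp [unitSphere, Set.mem_prod, mem_sphere_iff_norm]

lemma lintegral_transfer {P Q : Measure (Ed d × Ed d)}
    (hQsupp : Q {p : Ed d × Ed d | ‖p.1‖ ≠ 1} = 0)
    (hQG : ∀ E : Set (Ed d × Ed d), MeasurableSet E →
      E ⊆ unitSphere d ×ˢ ({0}ᶜ : Set (Ed d)) → Q E = nu d α P E)
    {C : Set (Ed d × Ed d)} (hC : MeasurableSet C) (hCsub : ∀ p ∈ C, p.2 ≠ 0)
    (h : (Ed d × Ed d) → ℝ≥0∞) :
    ∫⁻ p, C.indicator h p ∂Q = ∫⁻ p, C.indicator h p ∂(nu d α P) := by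
  set G : Set (Ed d × Ed d) := unitSphere d ×ˢ ({0}ᶜ : Set (Ed d)) with hGdef
  have hG : MeasurableSet G := msG
  have hrestr : Q.restrict G = (nu d α P).restrict G := by
    ext F hF
    rw [Measure.restrict_apply hF, Measure.restrict_apply hF,
      hQG (F ∩ G) (hF.inter hG) Set.inter_subset_right]
  have hsub : ∀ (μ : Measure (Ed d × Ed d)), μ (C ∩ Gᶜ) = 0 →
      ∫⁻ p, C.indicator h p ∂μ = ∫⁻ p, C.indicator h p ∂(μ.restrict G) := by
    intro μ hnull
    conv_lhs => rw [← Measure.restrict_add_restrict_compl (μ := μ) hG]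
    rw [lintegral_add_measure, lintegral_indicator hC, lintegral_indicator hC,
      Measure.restrict_restrict hC, Measure.restrict_restrict hC,
      setLIntegral_measure_zero _ _ hnull, add_zero]
  have hCGsub : C ∩ Gᶜ ⊆ {p : Ed d × Ed d | ‖p.1‖ ≠ 1} := by
    rintro p ⟨hpC, hpG⟩
    intro h1
    exact hpG (mem_G_iff.2 ⟨h1, hCsub p hpC⟩)
  rw [hsub Q (measure_mono_null hCGsub hQsupp),
    hsub (nu d α P) (measure_mono_null hCGsub (nu_bad P)), hrestr]

lemma lintegral_nu {P : Measure (Ed d × Ed d)} {g : (Ed d × Ed d) → ℝ≥0∞}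
    (hg : Measurable g) :
    ∫⁻ p, g p ∂(nu d α P)
      = ∫⁻ p, ({p : Ed d × Ed d | p.2 ≠ 0}.indicator (w d α) p) * g (phi d p) ∂P := by
  rw [nu, lintegral_map hg measurable_phi]
  exact lintegral_withDensity_eq_lintegral_mul P (measurable_w.indicator msZ)
    (hg.comp measurable_phi)

variable {P Q R : Measure (Ed d × Ed d)}

lemma norm_phi_snd {p : Ed d × Ed d} (h1 : ‖p.1‖ = 1) : ‖(phi d p).2‖ = ‖p.2‖⁻¹ := by
  simp [phi, norm_smul, abs_of_nonneg (inv_nonneg.2 (norm_nonneg p.2)), h1]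

lemma phi_snd_ne_zero {p : Ed d × Ed d} (h1 : ‖p.1‖ = 1) (h2 : p.2 ≠ 0) : (phi d p).2 ≠ 0 := by
  have h1' : p.1 ≠ 0 := by intro h; rw [h] at h1; simp at h1
  exact smul_ne_zero (inv_ne_zero (norm_ne_zero_iff.2 h2)) h1'

lemma phi_phi {p : Ed d × Ed d} (h1 : ‖p.1‖ = 1) (h2 : p.2 ≠ 0) : phi d (phi d p) = p := by
  have hm : ‖p.2‖ ≠ 0 := norm_ne_zero_iff.2 h2
  have hn2 : ‖(phi d p).2‖ = ‖p.2‖⁻¹ := norm_phi_snd h1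
  have h : phi d (phi d p) = (‖(phi d p).2‖⁻¹ • (phi d p).2, ‖(phi d p).2‖⁻¹ • (phi d p).1) := rfl
  rw [h, hn2, inv_inv]
  show (‖p.2‖ • ‖p.2‖⁻¹ • p.1, ‖p.2‖ • ‖p.2‖⁻¹ • p.2) = p
  rw [smul_smul, smul_smul, mul_inv_cancel₀ hm, one_smul, one_smul]

lemma weight_cancel {p : Ed d × Ed d} (h2 : p.2 ≠ 0) :
    ENNReal.ofReal (‖p.2‖ ^ α) * ENNReal.ofReal ((‖p.2‖⁻¹) ^ α) = 1 := by
  have hm : 0 < ‖p.2‖ := norm_pos_iff.2 h2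
  rw [← ENNReal.ofReal_mul (Real.rpow_nonneg (norm_nonneg _) α),
    ← Real.mul_rpow (le_of_lt hm) (inv_nonneg.2 (le_of_lt hm)), mul_inv_cancel₀ (ne_of_gt hm),
    Real.one_rpow, ENNReal.ofReal_one]

lemma Pae (hP : MemMalpha d α P) : ∀ᵐ p ∂P, ‖p.1‖ = 1 := by
  haveI := hP.prob
  rw [ae_iff]
  have : {p : Ed d × Ed d | ¬ ‖p.1‖ = 1} = {p : Ed d × Ed d | ‖p.1‖ = 1}ᶜ := rfl
  rw [this, measure_compl msSph (measure_ne_top P _), hP.sphere, measure_univ, tsub_self]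

lemma hQG (hQ : IsAdjoint d α P Q) :
    ∀ E : Set (Ed d × Ed d), MeasurableSet E →
      E ⊆ unitSphere d ×ˢ ({0}ᶜ : Set (Ed d)) → Q E = nu d α P E :=
  fun E hE hs => (hQ.eq_pos E hE hs).trans (nu_apply P hE).symm

/-- C1 -/
lemma R_eq_P_on_G (hP : MemMalpha d α P) (hQ : IsAdjoint d α P Q) (hR : IsAdjoint d α Q R)
    {E : Set (Ed d × Ed d)} (hE : MeasurableSet E)
    (hEG : E ⊆ unitSphere d ×ˢ ({0}ᶜ : Set (Ed d))) : R E = P E := by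
  set C : Set (Ed d × Ed d) := {p | p.2 ≠ 0 ∧ phi d p ∈ E} with hC
  have hCm : MeasurableSet C := msZ.inter (measurable_phi hE)
  have h1 : R E = ∫⁻ p, C.indicator (w d α) p ∂Q := hR.eq_pos E hE hEG
  rw [h1, lintegral_transfer hQ.supp (hQG hQ) hCm (fun p hp => hp.1) (w d α),
    lintegral_nu (measurable_w.indicator hCm), ← lintegral_indicator_one hE]
  apply lintegral_congr_ae
  filter_upwards [Pae hP] with p h1p
  by_cases h2 : p.2 = 0
  · have hpE : p ∉ E := fun hpE => (mem_G_iff.1 (hEG hpE)).2 h2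
    have hpz : p ∉ {p : Ed d × Ed d | p.2 ≠ 0} := fun hc => hc h2
    rw [Set.indicator_of_notMem hpz, zero_mul, Set.indicator_of_notMem hpE]
  · rw [Set.indicator_of_mem (show p ∈ {p : Ed d × Ed d | p.2 ≠ 0} from h2)]
    by_cases hpE : p ∈ E
    · have hmem : phi d p ∈ C := ⟨phi_snd_ne_zero h1p h2, by rwa [phi_phi h1p h2]⟩
      rw [Set.indicator_of_mem hmem, Set.indicator_of_mem hpE]
      have : w d α (phi d p) = ENNReal.ofReal ((‖p.2‖⁻¹) ^ α) := by
        rw [show w d α (phi d p) = ENNReal.ofReal (‖(phi d p).2‖ ^ α) from rfl,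
          norm_phi_snd h1p]
      rw [this]
      exact weight_cancel h2
    · have hmem : phi d p ∉ C := by
        intro hc
        rw [hC, Set.mem_setOf_eq, phi_phi h1p h2] at hc
        exact hpE hc.2
      rw [Set.indicator_of_notMem hmem, mul_zero, Set.indicator_of_notMem hpE]

/-- C2 -/
lemma dirMass_Q (hP : MemMalpha d α P) (hQ : IsAdjoint d α P Q)
    {S : Set (Ed d)} (hS : MeasurableSet S) :
    dirMass d α Q S = P {p : Ed d × Ed d | p.1 ∈ S ∧ p.2 ≠ 0} := by
  set C : Set (Ed d × Ed d) := {p | p.2 ≠ 0 ∧ ‖p.2‖⁻¹ • p.2 ∈ S} with hC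
  have hCm : MeasurableSet C := msZ.inter (hS.preimage (by fun_prop))
  have hDm : MeasurableSet {p : Ed d × Ed d | p.1 ∈ S ∧ p.2 ≠ 0} :=
    (hS.preimage measurable_fst).inter msZ
  have h1 : dirMass d α Q S = ∫⁻ p, C.indicator (w d α) p ∂Q := rfl
  rw [h1, lintegral_transfer hQ.supp (hQG hQ) hCm (fun p hp => hp.1) (w d α),
    lintegral_nu (measurable_w.indicator hCm), ← lintegral_indicator_one hDm]
  apply lintegral_congr_ae
  filter_upwards [Pae hP] with p h1p
  by_cases h2 : p.2 = 0
  · have hpD : p ∉ {p : Ed d × Ed d | p.1 ∈ S ∧ p.2 ≠ 0} := fun hc => hc.2 h2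
    have hpz : p ∉ {p : Ed d × Ed d | p.2 ≠ 0} := fun hc => hc h2
    rw [Set.indicator_of_notMem hpz, zero_mul, Set.indicator_of_notMem hpD]
  · rw [Set.indicator_of_mem (show p ∈ {p : Ed d × Ed d | p.2 ≠ 0} from h2)]
    have hkey : ‖(phi d p).2‖⁻¹ • (phi d p).2 = p.1 := by
      have := phi_phi h1p h2
      have h' : (phi d (phi d p)).1 = p.1 := by rw [this]
      exact h'
    by_cases hpS : p.1 ∈ S
    · have hmem : phi d p ∈ C := ⟨phi_snd_ne_zero h1p h2, by rw [hkey]; exact hpS⟩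
      rw [Set.indicator_of_mem hmem,
        Set.indicator_of_mem (show p ∈ {p : Ed d × Ed d | p.1 ∈ S ∧ p.2 ≠ 0} from ⟨hpS, h2⟩)]
      have : w d α (phi d p) = ENNReal.ofReal ((‖p.2‖⁻¹) ^ α) := by
        rw [show w d α (phi d p) = ENNReal.ofReal (‖(phi d p).2‖ ^ α) from rfl,
          norm_phi_snd h1p]
      rw [this]
      exact weight_cancel h2
    · have hmem : phi d p ∉ C := by
        intro hc
        rw [hC, Set.mem_setOf_eq, hkey] at hc
        exact hpS hc.2
      rw [Set.indicator_of_notMem hmem, mul_zero,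
        Set.indicator_of_notMem (show p ∉ {p : Ed d × Ed d | p.1 ∈ S ∧ p.2 ≠ 0} from
          fun hc => hpS hc.1)]

/-- C3 -/
lemma Q_prod_compl (hP : MemMalpha d α P) (hQ : IsAdjoint d α P Q)
    {S : Set (Ed d)} (hS : MeasurableSet S) (hSsub : S ⊆ unitSphere d) :
    Q (S ×ˢ ({0}ᶜ : Set (Ed d))) = dirMass d α P S := by
  rw [hQ.eq_pos (S ×ˢ ({0}ᶜ : Set (Ed d))) (hS.prod (measurableSet_singleton 0).compl)
    (Set.prod_mono hSsub subset_rfl), dirMass]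
  apply lintegral_congr_ae
  filter_upwards [Pae hP] with p h1p
  set A : Set (Ed d × Ed d) :=
    {p | p.2 ≠ 0 ∧ (‖p.2‖⁻¹ • p.2, ‖p.2‖⁻¹ • p.1) ∈ S ×ˢ ({0}ᶜ : Set (Ed d))} with hAdef
  set B : Set (Ed d × Ed d) := {p | p.2 ≠ 0 ∧ ‖p.2‖⁻¹ • p.2 ∈ S} with hBdef
  by_cases h2 : p.2 = 0
  · rw [Set.indicator_of_notMem (show p ∉ A from fun hc => hc.1 h2),
      Set.indicator_of_notMem (show p ∉ B from fun hc => hc.1 h2)]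
  · have hne : ‖p.2‖⁻¹ • p.1 ≠ 0 := phi_snd_ne_zero h1p h2
    by_cases hpS : ‖p.2‖⁻¹ • p.2 ∈ S
    · rw [Set.indicator_of_mem (show p ∈ A from ⟨h2, ⟨hpS, hne⟩⟩),
        Set.indicator_of_mem (show p ∈ B from ⟨h2, hpS⟩)]
    · rw [Set.indicator_of_notMem (show p ∉ A from fun hc => hpS hc.2.1),
        Set.indicator_of_notMem (show p ∉ B from fun hc => hpS hc.2)]

/-- C4 -/
lemma Q_prod_univ (hP : MemMalpha d α P) (hQ : IsAdjoint d α P Q)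
    {S : Set (Ed d)} (hS : MeasurableSet S) (hSsub : S ⊆ unitSphere d) :
    Q (S ×ˢ (univ : Set (Ed d))) = P (S ×ˢ (univ : Set (Ed d))) := by
  have hsplit : S ×ˢ (univ : Set (Ed d))
      = S ×ˢ ({0} : Set (Ed d)) ∪ S ×ˢ ({0}ᶜ : Set (Ed d)) := by
    rw [← Set.prod_union, Set.union_compl_self]
  have hdisj : Disjoint (S ×ˢ ({0} : Set (Ed d))) (S ×ˢ ({0}ᶜ : Set (Ed d))) := by
    apply Set.disjoint_left.2
    rintro p ⟨_, hp0⟩ ⟨_, hp0'⟩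
    exact hp0' hp0
  conv_lhs => rw [hsplit]
  rw [measure_union hdisj (hS.prod (measurableSet_singleton 0).compl),
    hQ.eq_zero S hS hSsub, Q_prod_compl hP hQ hS hSsub,
    tsub_add_cancel_of_le (hP.adm S hS hSsub)]

/-- C5 -/
lemma R_prod_zero (hP : MemMalpha d α P) (hQ : IsAdjoint d α P Q) (hR : IsAdjoint d α Q R)
    {S : Set (Ed d)} (hS : MeasurableSet S) (hSsub : S ⊆ unitSphere d) :
    R (S ×ˢ ({0} : Set (Ed d))) = P (S ×ˢ ({0} : Set (Ed d))) := by
  haveI := hP.prob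
  rw [hR.eq_zero S hS hSsub, Q_prod_univ hP hQ hS hSsub, dirMass_Q hP hQ hS]
  have hZ : MeasurableSet {p : Ed d × Ed d | p.2 = 0} :=
    (measurableSet_singleton 0).preimage measurable_snd
  have key := measure_inter_add_diff (μ := P) (S ×ˢ (univ : Set (Ed d))) hZ
  have e1 : S ×ˢ (univ : Set (Ed d)) ∩ {p : Ed d × Ed d | p.2 = 0}
      = S ×ˢ ({0} : Set (Ed d)) := by
    ext p
    simp only [Set.mem_inter_iff, Set.mem_prod, Set.mem_setOf_eq, Set.mem_univ, and_true,
      Set.mem_singleton_iff]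
  have e2 : S ×ˢ (univ : Set (Ed d)) \ {p : Ed d × Ed d | p.2 = 0}
      = {p : Ed d × Ed d | p.1 ∈ S ∧ p.2 ≠ 0} := by
    ext p
    simp only [Set.mem_diff, Set.mem_prod, Set.mem_setOf_eq, Set.mem_univ, and_true,
      Set.mem_singleton_iff]
  rw [e1, e2] at key
  rw [← key, ENNReal.add_sub_cancel_right (measure_ne_top P _)]


/-- Lemma 4.1(iv): taking adjoints is an involution on `M_α`: the adjoint of the
adjoint of `P` is `P` itself. -/
theorem adjoint_adjoint
    {d : ℕ} {α : ℝ} (hα : 0 < α) (P Q R : Measure (Ed d × Ed d))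
    (hP : MemMalpha d α P) (hQ : IsAdjoint d α P Q) (hR : IsAdjoint d α Q R) :
    R = P := by
  haveI := hP.prob
  ext A hA
  have hZm : MeasurableSet {p : Ed d × Ed d | p.2 = 0} :=
    (measurableSet_singleton 0).preimage measurable_snd
  have decomp : ∀ μ : Measure (Ed d × Ed d), μ {p : Ed d × Ed d | ‖p.1‖ ≠ 1} = 0 →
      μ A = μ (A ∩ {p : Ed d × Ed d | ‖p.1‖ = 1} ∩ {p : Ed d × Ed d | p.2 = 0})
        + μ ((A ∩ {p : Ed d × Ed d | ‖p.1‖ = 1}) \ {p : Ed d × Ed d | p.2 = 0}) := by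
    intro μ hnull
    have h1 : μ A = μ (A ∩ {p : Ed d × Ed d | ‖p.1‖ = 1})
        + μ (A \ {p : Ed d × Ed d | ‖p.1‖ = 1}) := (measure_inter_add_diff A msSph).symm
    have h2 : μ (A \ {p : Ed d × Ed d | ‖p.1‖ = 1}) = 0 :=
      measure_mono_null (fun p hp => hp.2) hnull
    rw [h1, h2, add_zero,
      ← measure_inter_add_diff (A ∩ {p : Ed d × Ed d | ‖p.1‖ = 1}) hZm]
  have hPnull : P {p : Ed d × Ed d | ‖p.1‖ ≠ 1} = 0 := by
    have h := Pae hP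
    rwa [ae_iff] at h
  rw [decomp R hR.supp, decomp P hPnull]
  congr 1
  · set SA : Set (Ed d) := {x : Ed d | (x, (0 : Ed d)) ∈ A ∧ ‖x‖ = 1} with hSA
    have hSAm : MeasurableSet SA := by
      have h1 : MeasurableSet {x : Ed d | (x, (0 : Ed d)) ∈ A} :=
        hA.preimage (measurable_id.prodMk measurable_const)
      have h2 : MeasurableSet {x : Ed d | ‖x‖ = 1} :=
        (measurableSet_singleton (1:ℝ)).preimage measurable_norm
      exact h1.inter h2
    have hSAsub : SA ⊆ unitSphere d := fun x hx => by
      rw [unitSphere, mem_sphere_zero_iff_norm]; exact hx.2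
    have hset : A ∩ {p : Ed d × Ed d | ‖p.1‖ = 1} ∩ {p : Ed d × Ed d | p.2 = 0}
        = SA ×ˢ ({0} : Set (Ed d)) := by
      ext ⟨x, y⟩
      simp only [Set.mem_inter_iff, Set.mem_setOf_eq, Set.mem_prod, Set.mem_singleton_iff, hSA]
      constructor
      · rintro ⟨⟨hA', h1'⟩, h2'⟩
        subst h2'
        exact ⟨⟨hA', h1'⟩, rfl⟩
      · rintro ⟨⟨hA', h1'⟩, h2'⟩
        subst h2'
        exact ⟨⟨hA', h1'⟩, rfl⟩
    rw [hset]
    exact R_prod_zero hP hQ hR hSAm hSAsub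
  · apply R_eq_P_on_G hP hQ hR ((hA.inter msSph).diff hZm)
    intro p hp
    exact mem_G_iff.2 ⟨hp.1.2, hp.2⟩
end
end

section
/- Let α > 0 and let (X₀, X₁) be ℝ^d-valued random vectors with law(X₀) = law(X₁), with Pr(‖X₀‖ > x) > 0 for all x > 0 and Pr(‖X₀‖ > ux)/Pr(‖X₀‖ > x) → u^{−α} as x → ∞ for every u > 0. Suppose there exist random elements Y ∈ ℝ, M₀ ∈ S^{d−1}, M₁ ∈ ℝ^d on some probability space with Y independent of (M₀, M₁), Pr(Y > y) = y^{−α} for y ≥ 1, such that for every bounded continuous f : ℝ × ℝ^d × ℝ^d → ℝ, E[f(‖X₀‖/x, X₀/‖X₀‖, X₁/‖X₀‖) | ‖X₀‖ > x] → E[f(Y, M₀, M₁)] as x → ∞. Then for every Borel set S ⊆ S^{d−1}, E[1_{{M₁ ≠ 0}} 1_S(M₁/‖M₁‖) ‖M₁‖^α] ≤ Pr(M₀ ∈ S); that is, the joint law of (M₀, M₁) belongs to M_α. -/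
open MeasureTheory Filter Set
open scoped ENNReal Topology Classical

noncomputable section

/-!
Fix a continuous `g : ℝ^d → [0,1]` and `0 < a < b`, and let `h` be the ramp from `0` at `a` to `1`
at `b`. On `{‖X₀‖ > x}` the test function `g(M₁/‖M₁‖) h(Y ‖M₁‖)` evaluates to `Φ(X₁)` with
`Φ(v) = g(v/‖v‖) h(‖v‖/x)`, and stationarity gives
`E[Φ(X₁); ‖X₀‖ > x] ≤ E Φ(X₀) ≤ E[g(X₀/‖X₀‖); ‖X₀‖ > a x]`. Dividing by `P(‖X₀‖ > x)` and using
regular variation, `E[g(M₁/‖M₁‖) h(Y ‖M₁‖)] ≤ a^{-α} E g(M₀)`. As `Y` is Pareto and independent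
of `M₁`, `b^α P(Y ‖M₁‖ > b | M₁) = min(b^α, ‖M₁‖^α)`; letting `b → ∞` with `b/a` fixed and then
`b/a → 1` yields `E[g(M₁/‖M₁‖) ‖M₁‖^α] ≤ E g(M₀)`. Both sides integrate `g` against finite Borel
measures, so the inequality passes from continuous `g` to indicators of Borel sets.
-/

open ProbabilityTheory
open scoped NNReal BoundedContinuousFunction

def ramp (a b t : ℝ) : ℝ := min 1 (max 0 ((t - a) / (b - a)))

section Ramp

variable {a b : ℝ}

lemma ramp_nonneg (t : ℝ) : 0 ≤ ramp a b t :=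
  le_min zero_le_one (le_max_left _ _)

lemma ramp_le_one (t : ℝ) : ramp a b t ≤ 1 := min_le_left _ _

lemma ramp_eq_zero (hab : a < b) {t : ℝ} (ht : t ≤ a) : ramp a b t = 0 := by
  have : (t - a) / (b - a) ≤ 0 := div_nonpos_of_nonpos_of_nonneg (by linarith) (by linarith)
  simp [ramp, max_eq_left this]

lemma ramp_eq_one (hab : a < b) {t : ℝ} (ht : b ≤ t) : ramp a b t = 1 := by
  have : 1 ≤ (t - a) / (b - a) := (le_div_iff₀ (by linarith)).2 (by linarith)
  simp [ramp, max_eq_right (zero_le_one.trans this), this]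

lemma continuous_ramp (a b : ℝ) : Continuous (ramp a b) := by
  unfold ramp; fun_prop

lemma mul_ramp_mem_Icc {s : ℝ} (hs : s ∈ Icc (0 : ℝ) 1) (t : ℝ) : s * ramp a b t ∈ Icc (0 : ℝ) 1 :=
  ⟨mul_nonneg hs.1 (ramp_nonneg t), mul_le_one₀ hs.2 (ramp_nonneg t) (ramp_le_one t)⟩

end Ramp

section Normalize

variable {E : Type*} [NormedAddCommGroup E] [NormedSpace ℝ E]

lemma continuousAt_normalize {m : E} (hm : m ≠ 0) : ContinuousAt NormedSpace.normalize m :=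
  (continuous_norm.continuousAt.inv₀ (norm_ne_zero_iff.2 hm)).smul continuousAt_id

lemma measurable_normalize [MeasurableSpace E] [BorelSpace E] [SecondCountableTopology E] :
    Measurable (NormedSpace.normalize : E → E) :=
  measurable_norm.inv.smul measurable_id

-- `NormedSpace.normalize` jumps at `0`, but the ramp factor vanishes near `m = 0`.
lemma continuous_comp_normalize_mul_ramp {g : E → ℝ} (hg : Continuous g) {a b : ℝ} (ha : 0 < a)
    (hab : a < b) :
    Continuous fun p : ℝ × E => g (NormedSpace.normalize p.2) * ramp a b (p.1 * ‖p.2‖) := by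
  rw [continuous_iff_continuousAt]
  rintro ⟨y, m⟩
  by_cases hm : m = 0
  · subst hm
    have hsmall : ∀ᶠ q : ℝ × E in 𝓝 (y, 0), q.1 * ‖q.2‖ < a := by
      have : Tendsto (fun q : ℝ × E => q.1 * ‖q.2‖) (𝓝 (y, 0)) (𝓝 0) := by
        simpa using (show Continuous fun q : ℝ × E => q.1 * ‖q.2‖ by fun_prop).tendsto (y, 0)
      exact this.eventually (gt_mem_nhds ha)
    refine (continuousAt_const (y := (0 : ℝ))).congr (hsmall.mono fun q hq => ?_)
    simp [ramp_eq_zero hab hq.le]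
  · exact ((hg.continuousAt.comp (continuousAt_normalize hm)).comp (x := (y, m))
      continuousAt_snd).mul
      ((continuous_ramp a b).comp (continuous_fst.mul continuous_snd.norm)).continuousAt

lemma normalize_mul_ramp_le_indicator {g : E → ℝ} (hg : ∀ m, g m ∈ Icc (0 : ℝ) 1) {a b x : ℝ}
    (hab : a < b) (hx : 0 < x) (v : E) :
    g (NormedSpace.normalize v) * ramp a b (‖v‖ / x)
      ≤ {v : E | a * x < ‖v‖}.indicator (fun v => g (NormedSpace.normalize v)) v := by
  by_cases hv : a * x < ‖v‖
  · simpa [hv] using mul_le_of_le_one_right (hg _).1 (ramp_le_one _)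
  · have : ‖v‖ / x ≤ a := (div_le_iff₀ hx).2 (by linarith)
    simp [hv, ramp_eq_zero hab this]

end Normalize

section Independence

variable {Ω' : Type*} [MeasurableSpace Ω'] {ν : Measure Ω'} [IsFiniteMeasure ν]

lemma lintegral_comp_eq_lintegral_lintegral_of_indepFun {β γ : Type*} [MeasurableSpace β]
    [MeasurableSpace γ] {Y : Ω' → β} {Z : Ω' → γ} (hY : Measurable Y) (hZ : Measurable Z)
    (hind : Y ⟂ᵢ[ν] Z) {H : β × γ → ℝ≥0∞} (hH : Measurable H) :
    ∫⁻ ω, H (Y ω, Z ω) ∂ν = ∫⁻ ω, ∫⁻ ω', H (Y ω', Z ω) ∂ν ∂ν := by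
  rw [← lintegral_map hH (hY.prodMk hZ), hind.map_prod_eq_prod_map_map hY.aemeasurable
    hZ.aemeasurable, lintegral_prod_symm' _ hH, lintegral_map _ hZ]
  · exact lintegral_congr fun ω => lintegral_map (hH.comp measurable_prodMk_right) hY
  · exact (hH.lintegral_prod_left' (μ := ν.map Y))

end Independence

section Pareto

variable {Ω' : Type*} [MeasurableSpace Ω'] {ν : Measure Ω'} [IsProbabilityMeasure ν]
  {Y : Ω' → ℝ} {α : ℝ}

lemma pareto_tail (hα : 0 ≤ α)
    (hYlaw : ∀ y : ℝ, 1 ≤ y → ν {ω | y < Y ω} = ENNReal.ofReal (y ^ (-α)))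
    {c : ℝ} (hc : 0 < c) : ν {ω | c < Y ω} = ENNReal.ofReal (min 1 (c ^ (-α))) := by
  rcases le_or_gt 1 c with hc1 | hc1
  · rw [hYlaw c hc1, min_eq_right (Real.rpow_le_one_of_one_le_of_nonpos hc1 (by linarith))]
  · have hone : ν {ω | 1 < Y ω} = 1 := by simp [hYlaw 1 le_rfl]
    have : ν {ω | c < Y ω} = 1 :=
      le_antisymm prob_le_one (hone ▸ measure_mono fun ω (h : 1 < Y ω) => hc1.trans h)
    rw [this, min_eq_left (Real.one_le_rpow_of_pos_of_le_one_of_nonpos hc hc1.le (by linarith)),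
      ENNReal.ofReal_one]

lemma ofReal_rpow_mul_pareto_tail (hα : 0 < α)
    (hYlaw : ∀ y : ℝ, 1 ≤ y → ν {ω | y < Y ω} = ENNReal.ofReal (y ^ (-α)))
    {t r : ℝ} (ht : 0 < t) (hr : 0 ≤ r) :
    ENNReal.ofReal (t ^ α) * ν {ω | t < Y ω * r} = ENNReal.ofReal (min (t ^ α) (r ^ α)) := by
  rcases hr.eq_or_lt with rfl | hr
  · simp [Real.zero_rpow hα.ne', not_lt.2 ht.le, Real.rpow_nonneg ht.le]
  have hset : {ω | t < Y ω * r} = {ω | t / r < Y ω} := by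
    ext ω; simp [div_lt_iff₀ hr]
  have hscale : t ^ α * (t / r) ^ (-α) = r ^ α := by
    rw [Real.rpow_neg (by positivity), Real.div_rpow ht.le hr.le, inv_div,
      mul_div_cancel₀ _ (Real.rpow_pos_of_pos ht α).ne']
  rw [hset, pareto_tail hα.le hYlaw (div_pos ht hr), ← ENNReal.ofReal_mul (by positivity),
    mul_min_of_nonneg _ _ (by positivity), mul_one, hscale]

variable {E : Type*} [NormedAddCommGroup E] [MeasurableSpace E] [BorelSpace E]

lemma ofReal_rpow_mul_lintegral_tail {M : Ω' → E} (hα : 0 < α)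
    (hYlaw : ∀ y : ℝ, 1 ≤ y → ν {ω | y < Y ω} = ENNReal.ofReal (y ^ (-α)))
    (hY : Measurable Y) (hM : Measurable M) (hind : Y ⟂ᵢ[ν] M)
    {G : E → ℝ} (hG : Measurable G) (hG0 : ∀ m, 0 ≤ G m) {t : ℝ} (ht : 0 < t) :
    ENNReal.ofReal (t ^ α) * ∫⁻ ω, {ω | t < Y ω * ‖M ω‖}.indicator
        (fun ω => ENNReal.ofReal (G (M ω))) ω ∂ν
      = ∫⁻ ω, ENNReal.ofReal (G (M ω) * min (t ^ α) (‖M ω‖ ^ α)) ∂ν := by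
  have hH : Measurable fun p : ℝ × E =>
      {p : ℝ × E | t < p.1 * ‖p.2‖}.indicator (fun p => ENNReal.ofReal (G p.2)) p :=
    (hG.comp measurable_snd).ennreal_ofReal.indicator
      (measurableSet_lt measurable_const (by fun_prop))
  calc ENNReal.ofReal (t ^ α) * ∫⁻ ω, {ω | t < Y ω * ‖M ω‖}.indicator
          (fun ω => ENNReal.ofReal (G (M ω))) ω ∂ν
      = ENNReal.ofReal (t ^ α) * ∫⁻ ω, ∫⁻ ω', {ω' | t < Y ω' * ‖M ω‖}.indicator
          (fun _ => ENNReal.ofReal (G (M ω))) ω' ∂ν ∂ν :=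
        congrArg _ (lintegral_comp_eq_lintegral_lintegral_of_indepFun hY hM hind hH)
    _ = ∫⁻ ω, ENNReal.ofReal (G (M ω)) *
          (ENNReal.ofReal (t ^ α) * ν {ω' | t < Y ω' * ‖M ω‖}) ∂ν := by
        rw [← lintegral_const_mul' _ _ ENNReal.ofReal_ne_top]
        refine lintegral_congr fun ω => ?_
        rw [lintegral_indicator_const (measurableSet_lt measurable_const (hY.mul_const _)),
          mul_left_comm]
    _ = ∫⁻ ω, ENNReal.ofReal (G (M ω) * min (t ^ α) (‖M ω‖ ^ α)) ∂ν := by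
        simp_rw [ofReal_rpow_mul_pareto_tail hα hYlaw ht (norm_nonneg _),
          ENNReal.ofReal_mul (hG0 _)]

end Pareto

section Tail

variable {E : Type*} [NormedAddCommGroup E] [NormedSpace ℝ E] [MeasurableSpace E] [BorelSpace E]
  [SecondCountableTopology E] {Ω : Type*} [MeasurableSpace Ω]

def tailCondExp (μ : Measure Ω) (X₀ X₁ : Ω → E) (f : ℝ × E × E → ℝ) (x : ℝ) : ℝ :=
  (∫ ω in {ω | x < ‖X₀ ω‖}, f (‖X₀ ω‖ / x, ‖X₀ ω‖⁻¹ • X₀ ω, ‖X₀ ω‖⁻¹ • X₁ ω) ∂μ)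
    / (μ {ω | x < ‖X₀ ω‖}).toReal

variable {μ : Measure Ω} [IsProbabilityMeasure μ] {X₀ X₁ : Ω → E} {g : E → ℝ} {a b x : ℝ}

lemma setIntegral_normalize_mul_ramp_le (hX₀ : Measurable X₀) (hX₁ : Measurable X₁)
    (hstat : μ.map X₀ = μ.map X₁) (hgc : Continuous g) (hg : ∀ m, g m ∈ Icc (0 : ℝ) 1)
    (hab : a < b) (hx : 0 < x) :
    ∫ ω in {ω | x < ‖X₀ ω‖}, g (NormedSpace.normalize (‖X₀ ω‖⁻¹ • X₁ ω))
        * ramp a b (‖X₀ ω‖ / x * ‖‖X₀ ω‖⁻¹ • X₁ ω‖) ∂μ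
      ≤ ∫ ω in {ω | a * x < ‖X₀ ω‖}, g (NormedSpace.normalize (X₀ ω)) ∂μ := by
  set Φ : E → ℝ := fun v => g (NormedSpace.normalize v) * ramp a b (‖v‖ / x)
  have hΦ : Measurable Φ := (hgc.measurable.comp measurable_normalize).mul
    ((continuous_ramp a b).measurable.comp (measurable_norm.div_const x))
  have hΦ01 (v : E) : Φ v ∈ Icc (0 : ℝ) 1 := mul_ramp_mem_Icc (hg _) _
  have hΦint {X : Ω → E} (hX : Measurable X) : Integrable (fun ω => Φ (X ω)) μ :=
    .of_mem_Icc 0 1 (hΦ.comp hX).aemeasurable (ae_of_all _ fun ω => hΦ01 _)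
  have htail : MeasurableSet {ω | a * x < ‖X₀ ω‖} := measurableSet_lt measurable_const hX₀.norm
  calc _ = ∫ ω in {ω | x < ‖X₀ ω‖}, Φ (X₁ ω) ∂μ := by
        refine setIntegral_congr_fun (measurableSet_lt measurable_const hX₀.norm) fun ω hω => ?_
        have hpos : 0 < ‖X₀ ω‖ := hx.trans hω
        simp only [Φ, NormedSpace.normalize_smul_of_pos (inv_pos.2 hpos), norm_smul, norm_inv,
          norm_norm]
        field_simp
    _ ≤ ∫ ω, Φ (X₁ ω) ∂μ :=
        setIntegral_le_integral (hΦint hX₁) (ae_of_all _ fun ω => (hΦ01 _).1)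
    _ = ∫ ω, Φ (X₀ ω) ∂μ := by
        rw [← integral_map hX₁.aemeasurable hΦ.aestronglyMeasurable, ← hstat,
          integral_map hX₀.aemeasurable hΦ.aestronglyMeasurable]
    _ ≤ ∫ ω, {ω | a * x < ‖X₀ ω‖}.indicator (fun ω => g (NormedSpace.normalize (X₀ ω))) ω ∂μ :=
        integral_mono (hΦint hX₀) ((Integrable.of_mem_Icc 0 1
          (hgc.measurable.comp (measurable_normalize.comp hX₀)).aemeasurable
          (ae_of_all _ fun ω => hg _)).indicator htail)
          fun ω => normalize_mul_ramp_le_indicator hg hab hx (X₀ ω)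
    _ = _ := integral_indicator htail

lemma tailCondExp_normalize_mul_ramp_le (hX₀ : Measurable X₀) (hX₁ : Measurable X₁)
    (hstat : μ.map X₀ = μ.map X₁) (hpos : ∀ x : ℝ, 0 < x → 0 < μ {ω | x < ‖X₀ ω‖})
    (hgc : Continuous g) (hg : ∀ m, g m ∈ Icc (0 : ℝ) 1) (ha : 0 < a) (hab : a < b)
    (hx : 0 < x) :
    tailCondExp μ X₀ X₁ (fun p => g (NormedSpace.normalize p.2.2) * ramp a b (p.1 * ‖p.2.2‖)) x
      ≤ tailCondExp μ X₀ X₁ (fun p => g p.2.1) (a * x)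
        * ((μ {ω | a * x < ‖X₀ ω‖}).toReal / (μ {ω | x < ‖X₀ ω‖}).toReal) := by
  have hax : (μ {ω | a * x < ‖X₀ ω‖}).toReal ≠ 0 :=
    (ENNReal.toReal_pos (hpos _ (mul_pos ha hx)).ne' (measure_ne_top _ _)).ne'
  rw [tailCondExp, tailCondExp, div_mul_div_cancel₀ hax]
  gcongr
  exact setIntegral_normalize_mul_ramp_le hX₀ hX₁ hstat hgc hg hab hx

lemma integral_normalize_mul_ramp_le {α : ℝ} (hX₀ : Measurable X₀) (hX₁ : Measurable X₁)
    (hstat : μ.map X₀ = μ.map X₁) (hpos : ∀ x : ℝ, 0 < x → 0 < μ {ω | x < ‖X₀ ω‖})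
    (hreg : ∀ u : ℝ, 0 < u →
      Tendsto (fun x : ℝ =>
          (μ {ω | u * x < ‖X₀ ω‖}).toReal / (μ {ω | x < ‖X₀ ω‖}).toReal)
        atTop (𝓝 (u ^ (-α))))
    {Ω' : Type*} [MeasurableSpace Ω'] {ν : Measure Ω'} {Y : Ω' → ℝ} {M₀ M₁ : Ω' → E}
    (hconv : ∀ f : ℝ × E × E → ℝ, Continuous f → (∃ C : ℝ, ∀ y, |f y| ≤ C) →
      Tendsto (tailCondExp μ X₀ X₁ f) atTop (𝓝 (∫ ω, f (Y ω, M₀ ω, M₁ ω) ∂ν)))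
    (hgc : Continuous g) (hg : ∀ m, g m ∈ Icc (0 : ℝ) 1) (ha : 0 < a) (hab : a < b) :
    ∫ ω, g (NormedSpace.normalize (M₁ ω)) * ramp a b (Y ω * ‖M₁ ω‖) ∂ν
      ≤ (∫ ω, g (M₀ ω) ∂ν) * a ^ (-α) := by
  set f : ℝ × E × E → ℝ := fun p => g (NormedSpace.normalize p.2.2) * ramp a b (p.1 * ‖p.2.2‖)
  have hf : Continuous f := (continuous_comp_normalize_mul_ramp hgc ha hab).comp
    (by fun_prop : Continuous fun p : ℝ × E × E => (p.1, p.2.2))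
  have hf01 (p : ℝ × E × E) : f p ∈ Icc (0 : ℝ) 1 := mul_ramp_mem_Icc (hg _) _
  have bound {h : ℝ × E × E → ℝ} (h01 : ∀ p, h p ∈ Icc (0 : ℝ) 1) : ∃ C : ℝ, ∀ p, |h p| ≤ C :=
    ⟨1, fun p => abs_le.2 ⟨by linarith [(h01 p).1], (h01 p).2⟩⟩
  have hlhs := hconv f hf (bound hf01)
  have hrhs := ((hconv (fun p => g p.2.1) (by fun_prop) (bound fun p => hg p.2.1)).comp
    (tendsto_id.const_mul_atTop ha)).mul (hreg a ha)
  exact le_of_tendsto_of_tendsto hlhs hrhs ((eventually_gt_atTop 0).mono fun x hx =>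
    tailCondExp_normalize_mul_ramp_le hX₀ hX₁ hstat hpos hgc hg ha hab hx)

end Tail

section Spectral

variable {Ω' : Type*} [MeasurableSpace Ω'] {ν : Measure Ω'}

lemma lintegral_ofReal_mul_le_of_tendsto_min {ι : Type*} {l : Filter ι} [l.IsCountablyGenerated]
    [l.NeBot] {φ : ι → ℝ} (hφ : Tendsto φ l atTop) {G R : Ω' → ℝ} (hG : Measurable G)
    (hR : Measurable R) {K : ℝ≥0∞}
    (hK : ∀ᶠ i in l, ∫⁻ ω, ENNReal.ofReal (G ω * min (φ i) (R ω)) ∂ν ≤ K) :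
    ∫⁻ ω, ENNReal.ofReal (G ω * R ω) ∂ν ≤ K := by
  have hpt (ω : Ω') : Tendsto (fun i => ENNReal.ofReal (G ω * min (φ i) (R ω))) l
      (𝓝 (ENNReal.ofReal (G ω * R ω))) :=
    tendsto_const_nhds.congr' <| (hφ.eventually_ge_atTop (R ω)).mono fun i hi => by
      simp only [min_eq_right hi]
  calc ∫⁻ ω, ENNReal.ofReal (G ω * R ω) ∂ν
      = ∫⁻ ω, liminf (fun i => ENNReal.ofReal (G ω * min (φ i) (R ω))) l ∂ν :=
        lintegral_congr fun ω => (hpt ω).liminf_eq.symm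
    _ ≤ liminf (fun i => ∫⁻ ω, ENNReal.ofReal (G ω * min (φ i) (R ω)) ∂ν) l :=
        lintegral_liminf_le fun i => (hG.mul (measurable_const.min hR)).ennreal_ofReal
    _ ≤ K := liminf_le_of_frequently_le' hK.frequently

variable [IsProbabilityMeasure ν] {E : Type*} [NormedAddCommGroup E] [MeasurableSpace E]
  [BorelSpace E] {Y : Ω' → ℝ} {M : Ω' → E} {α : ℝ} {G : E → ℝ}

lemma lintegral_mul_min_rpow_le (hα : 0 < α)
    (hYlaw : ∀ y : ℝ, 1 ≤ y → ν {ω | y < Y ω} = ENNReal.ofReal (y ^ (-α)))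
    (hY : Measurable Y) (hM : Measurable M) (hind : Y ⟂ᵢ[ν] M)
    (hG : Measurable G) (hG01 : ∀ m, G m ∈ Icc (0 : ℝ) 1) {a b K : ℝ} (ha : 0 < a) (hab : a < b)
    (hK : ∫ ω, G (M ω) * ramp a b (Y ω * ‖M ω‖) ∂ν ≤ K) :
    ∫⁻ ω, ENNReal.ofReal (G (M ω) * min (b ^ α) (‖M ω‖ ^ α)) ∂ν
      ≤ ENNReal.ofReal (b ^ α) * ENNReal.ofReal K := by
  rw [← ofReal_rpow_mul_lintegral_tail hα hYlaw hY hM hind hG (fun m => (hG01 m).1)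
    (ha.trans hab)]
  have hramp : Measurable fun ω => G (M ω) * ramp a b (Y ω * ‖M ω‖) :=
    (hG.comp hM).mul ((continuous_ramp a b).measurable.comp (hY.mul hM.norm))
  have hramp01 (ω : Ω') : G (M ω) * ramp a b (Y ω * ‖M ω‖) ∈ Icc (0 : ℝ) 1 :=
    mul_ramp_mem_Icc (hG01 _) _
  gcongr
  calc ∫⁻ ω, {ω | b < Y ω * ‖M ω‖}.indicator (fun ω => ENNReal.ofReal (G (M ω))) ω ∂ν
      ≤ ∫⁻ ω, ENNReal.ofReal (G (M ω) * ramp a b (Y ω * ‖M ω‖)) ∂ν :=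
        lintegral_mono <| Set.indicator_le fun ω hω => by
          rw [ramp_eq_one hab (le_of_lt hω), mul_one]
    _ = ENNReal.ofReal (∫ ω, G (M ω) * ramp a b (Y ω * ‖M ω‖) ∂ν) :=
        (ofReal_integral_eq_lintegral_ofReal
          (.of_mem_Icc 0 1 hramp.aemeasurable (ae_of_all _ hramp01))
          (ae_of_all _ fun ω => (hramp01 ω).1)).symm
    _ ≤ ENNReal.ofReal K := ENNReal.ofReal_le_ofReal hK

lemma lintegral_mul_rpow_le (hα : 0 < α)
    (hYlaw : ∀ y : ℝ, 1 ≤ y → ν {ω | y < Y ω} = ENNReal.ofReal (y ^ (-α)))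
    (hY : Measurable Y) (hM : Measurable M) (hind : Y ⟂ᵢ[ν] M)
    (hG : Measurable G) (hG01 : ∀ m, G m ∈ Icc (0 : ℝ) 1) {K : ℝ}
    (hK : ∀ a b : ℝ, 0 < a → a < b → ∫ ω, G (M ω) * ramp a b (Y ω * ‖M ω‖) ∂ν ≤ K * a ^ (-α)) :
    ∫⁻ ω, ENNReal.ofReal (G (M ω) * ‖M ω‖ ^ α) ∂ν ≤ ENNReal.ofReal K := by
  have hc (c : ℝ) (hc1 : 1 < c) :
      ∫⁻ ω, ENNReal.ofReal (G (M ω) * ‖M ω‖ ^ α) ∂ν ≤ ENNReal.ofReal (c ^ α * K) := by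
    refine lintegral_ofReal_mul_le_of_tendsto_min (tendsto_rpow_atTop hα) (hG.comp hM)
      (hM.norm.pow_const α) ?_
    filter_upwards [eventually_gt_atTop 0] with b hb
    have ha : 0 < b / c := div_pos hb (one_pos.trans hc1)
    have hscale : b ^ α * (K * (b / c) ^ (-α)) = c ^ α * K := by
      rw [Real.rpow_neg ha.le, Real.div_rpow hb.le (one_pos.trans hc1).le, inv_div]
      field_simp
    calc _ ≤ ENNReal.ofReal (b ^ α) * ENNReal.ofReal (K * (b / c) ^ (-α)) :=
          lintegral_mul_min_rpow_le hα hYlaw hY hM hind hG hG01 ha (div_lt_self hb hc1)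
            (hK _ _ ha (div_lt_self hb hc1))
      _ = ENNReal.ofReal (c ^ α * K) := by
          rw [← ENNReal.ofReal_mul (by positivity), hscale]
  have hlim :
      Tendsto (fun c : ℝ => ENNReal.ofReal (c ^ α * K)) (𝓝[>] 1) (𝓝 (ENNReal.ofReal K)) := by
    have : ContinuousAt (fun c : ℝ => ENNReal.ofReal (c ^ α * K)) 1 :=
      ENNReal.continuous_ofReal.continuousAt.comp
        ((Real.continuousAt_rpow_const 1 α (Or.inl one_ne_zero)).mul_const K)
    simpa using this.tendsto.mono_left nhdsWithin_le_nhds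
  exact ge_of_tendsto hlim (eventually_nhdsWithin_of_forall hc)

end Spectral

lemma MeasureTheory.Measure.le_of_forall_lintegral_le {X : Type*} [TopologicalSpace X]
    [TopologicalSpace.PseudoMetrizableSpace X] [MeasurableSpace X] [BorelSpace X]
    {μ ν : Measure X} [IsFiniteMeasure ν]
    (h : ∀ f : X →ᵇ ℝ≥0, (∀ x, f x ≤ 1) → ∫⁻ x, f x ∂μ ≤ ∫⁻ x, f x ∂ν) : μ ≤ ν := by
  have hclosed (F : Set X) (hF : IsClosed F) : μ F ≤ ν F :=
    ge_of_tendsto' (HasOuterApproxClosed.tendsto_lintegral_apprSeq hF ν) fun n =>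
      (HasOuterApproxClosed.measure_le_lintegral hF μ n).trans
        (h _ (HasOuterApproxClosed.apprSeq_apply_le_one hF n))
  have : IsFiniteMeasure μ := ⟨(hclosed _ isClosed_univ).trans_lt (measure_lt_top ν _)⟩
  refine Measure.le_iff.2 fun S hS => ENNReal.le_of_forall_pos_le_add fun ε hε _ => ?_
  obtain ⟨F, hFS, hF, hμF⟩ :=
    hS.exists_isClosed_lt_add (measure_ne_top μ S) (ENNReal.coe_ne_zero.2 hε.ne')
  calc μ S ≤ μ F + ε := hμF.le
    _ ≤ ν S + ε := add_le_add_left ((hclosed F hF).trans (measure_mono hFS)) _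

section WeightedDirection

variable {E : Type*} [NormedAddCommGroup E] [NormedSpace ℝ E] [MeasurableSpace E] [BorelSpace E]
  [SecondCountableTopology E] {Ω' : Type*} [MeasurableSpace Ω'] {ν : Measure Ω'}
  {M : Ω' → E} {α : ℝ}

def weightedDirLaw (ν : Measure Ω') (M : Ω' → E) (α : ℝ) : Measure E :=
  (ν.withDensity fun ω => ENNReal.ofReal (‖M ω‖ ^ α)).map fun ω => NormedSpace.normalize (M ω)

lemma lintegral_weightedDirLaw (hM : Measurable M) {f : E → ℝ≥0∞} (hf : Measurable f) :
    ∫⁻ m, f m ∂weightedDirLaw ν M α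
      = ∫⁻ ω, ENNReal.ofReal (‖M ω‖ ^ α) * f (NormedSpace.normalize (M ω)) ∂ν := by
  have hdir : Measurable fun ω => NormedSpace.normalize (M ω) := measurable_normalize.comp hM
  rw [weightedDirLaw, lintegral_map hf hdir]
  exact lintegral_withDensity_eq_lintegral_mul _ (hM.norm.pow_const α).ennreal_ofReal
    (hf.comp hdir)

lemma weightedDirLaw_apply (hα : 0 < α) (hM : Measurable M) {S : Set E} (hS : MeasurableSet S) :
    weightedDirLaw ν M α S = ∫⁻ ω, {ω | M ω ≠ 0 ∧ NormedSpace.normalize (M ω) ∈ S}.indicator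
      (fun ω => ENNReal.ofReal (‖M ω‖ ^ α)) ω ∂ν := by
  rw [← lintegral_indicator_one hS, lintegral_weightedDirLaw hM (measurable_one.indicator hS)]
  refine lintegral_congr fun ω => ?_
  by_cases hω : M ω = 0
  · simp [hω, Real.zero_rpow hα.ne']
  · simp [hω, Set.indicator_apply]

variable [IsProbabilityMeasure ν] {M₀ : Ω' → E}

lemma weightedDirLaw_le_map (hM : Measurable M) (hM₀ : Measurable M₀)
    (h : ∀ g : E → ℝ, Continuous g → (∀ m, g m ∈ Icc (0 : ℝ) 1) →
      ∫⁻ ω, ENNReal.ofReal (g (NormedSpace.normalize (M ω)) * ‖M ω‖ ^ α) ∂ν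
        ≤ ENNReal.ofReal (∫ ω, g (M₀ ω) ∂ν)) :
    weightedDirLaw ν M α ≤ ν.map M₀ := by
  refine Measure.le_of_forall_lintegral_le fun f hf1 => ?_
  have hf : Measurable fun m => (f m : ℝ≥0∞) := f.continuous.measurable.coe_nnreal_ennreal
  have hg : Continuous fun m => (f m : ℝ) := NNReal.continuous_coe.comp f.continuous
  have hg01 (m : E) : (f m : ℝ) ∈ Icc (0 : ℝ) 1 := ⟨(f m).2, hf1 m⟩
  rw [lintegral_weightedDirLaw hM hf, lintegral_map hf hM₀]
  calc _ = ∫⁻ ω, ENNReal.ofReal (f (NormedSpace.normalize (M ω)) * ‖M ω‖ ^ α) ∂ν :=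
        lintegral_congr fun ω => by
          rw [mul_comm, ENNReal.ofReal_mul (hg01 _).1, ENNReal.ofReal_coe_nnreal]
    _ ≤ ENNReal.ofReal (∫ ω, (f (M₀ ω) : ℝ) ∂ν) := h _ hg hg01
    _ = ∫⁻ ω, f (M₀ ω) ∂ν := (lintegral_coe_eq_integral _ (.of_mem_Icc 0 1
          (hg.measurable.comp hM₀).aemeasurable (ae_of_all _ fun ω => hg01 _))).symm

end WeightedDirection

lemma dirMass_map_prodMk {d : ℕ} {α : ℝ} {Ω' : Type*} [MeasurableSpace Ω'] {ν : Measure Ω'}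
    {M₀ M₁ : Ω' → Ed d} (hM₀ : Measurable M₀) (hM₁ : Measurable M₁) {S : Set (Ed d)}
    (hS : MeasurableSet S) :
    dirMass d α (ν.map fun ω => (M₀ ω, M₁ ω)) S
      = ∫⁻ ω, {ω | M₁ ω ≠ 0 ∧ ‖M₁ ω‖⁻¹ • M₁ ω ∈ S}.indicator
          (fun ω => ENNReal.ofReal (‖M₁ ω‖ ^ α)) ω ∂ν :=
  lintegral_map ((measurable_snd.norm.pow_const α).ennreal_ofReal.indicator
    ((measurable_snd (measurableSet_singleton 0)).compl.inter
      ((measurable_normalize.comp measurable_snd) hS))) (hM₀.prodMk hM₁)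

/-- Lemma 4.3 (first part): the law of the spectral pair `(M 0, M 1)` of a stationary
regularly varying pair `(X 0, X 1)` is admissible, i.e. belongs to `M_α`:
`E[1_{M₁ ≠ 0} 1_S(M₁/‖M₁‖) ‖M₁‖^α] ≤ Pr(M₀ ∈ S)` for every Borel `S ⊆ S^{d-1}`. -/
theorem tail_pair_admissible
    {d : ℕ} {α : ℝ} (hα : 0 < α)
    {Ω : Type*} [MeasurableSpace Ω] (μ : Measure Ω) [IsProbabilityMeasure μ]
    (X₀ X₁ : Ω → Ed d) (hX₀ : Measurable X₀) (hX₁ : Measurable X₁)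
    (hstat : μ.map X₀ = μ.map X₁)
    (hpos : ∀ x : ℝ, 0 < x → 0 < μ {ω | x < ‖X₀ ω‖})
    (hreg : ∀ u : ℝ, 0 < u →
      Tendsto (fun x : ℝ =>
          (μ {ω | u * x < ‖X₀ ω‖}).toReal / (μ {ω | x < ‖X₀ ω‖}).toReal)
        atTop (𝓝 (u ^ (-α))))
    {Ω' : Type*} [MeasurableSpace Ω'] (ν : Measure Ω') [IsProbabilityMeasure ν]
    (Y : Ω' → ℝ) (M₀ M₁ : Ω' → Ed d)
    (hY : Measurable Y) (hM₀ : Measurable M₀) (hM₁ : Measurable M₁)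
    (hM₀sphere : ∀ ω, ‖M₀ ω‖ = 1)
    (hYindep : ProbabilityTheory.IndepFun Y (fun ω => (M₀ ω, M₁ ω)) ν)
    (hYlaw : ∀ y : ℝ, 1 ≤ y → ν {ω | y < Y ω} = ENNReal.ofReal (y ^ (-α)))
    (hconv : ∀ f : ℝ × Ed d × Ed d → ℝ, Continuous f → (∃ C : ℝ, ∀ y, |f y| ≤ C) →
      Tendsto (fun x : ℝ =>
          (∫ ω in {ω | x < ‖X₀ ω‖},
              f (‖X₀ ω‖ / x, ‖X₀ ω‖⁻¹ • X₀ ω, ‖X₀ ω‖⁻¹ • X₁ ω) ∂μ)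
            / (μ {ω | x < ‖X₀ ω‖}).toReal)
        atTop (𝓝 (∫ ω, f (Y ω, M₀ ω, M₁ ω) ∂ν))) :
    (∀ S : Set (Ed d), MeasurableSet S → S ⊆ unitSphere d →
      (∫⁻ ω, Set.indicator {ω | M₁ ω ≠ 0 ∧ ‖M₁ ω‖⁻¹ • M₁ ω ∈ S}
          (fun ω => ENNReal.ofReal (‖M₁ ω‖ ^ α)) ω ∂ν)
        ≤ ν {ω | M₀ ω ∈ S}) ∧
    MemMalpha d α (ν.map fun ω => (M₀ ω, M₁ ω)) := by
  have hkey (g : Ed d → ℝ) (hgc : Continuous g) (hg : ∀ m, g m ∈ Icc (0 : ℝ) 1) :=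
    lintegral_mul_rpow_le hα hYlaw hY hM₁ (hYindep.comp measurable_id measurable_snd)
      (hgc.measurable.comp measurable_normalize) (fun m => hg _) fun a b ha hab =>
        integral_normalize_mul_ramp_le hX₀ hX₁ hstat hpos hreg hconv hgc hg ha hab
  have hadm (S : Set (Ed d)) (hS : MeasurableSet S) :
      ∫⁻ ω, {ω | M₁ ω ≠ 0 ∧ ‖M₁ ω‖⁻¹ • M₁ ω ∈ S}.indicator
          (fun ω => ENNReal.ofReal (‖M₁ ω‖ ^ α)) ω ∂ν ≤ ν {ω | M₀ ω ∈ S} :=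
    calc _ = weightedDirLaw ν M₁ α S := (weightedDirLaw_apply hα hM₁ hS).symm
      _ ≤ ν.map M₀ S := weightedDirLaw_le_map hM₁ hM₀ hkey S
      _ = ν {ω | M₀ ω ∈ S} := Measure.map_apply hM₀ hS
  have hM : Measurable fun ω => (M₀ ω, M₁ ω) := hM₀.prodMk hM₁
  refine ⟨fun S hS _ => hadm S hS, Measure.isProbabilityMeasure_map hM.aemeasurable, ?_,
    fun S hS _ => ?_⟩
  · rw [Measure.map_apply hM (measurableSet_eq_fun measurable_fst.norm measurable_const)]
    simp [hM₀sphere]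
  · rw [dirMass_map_prodMk hM₀ hM₁ hS, Measure.map_apply hM (hS.prod .univ), mk_preimage_prod,
      preimage_univ, inter_univ]
    exact hadm S hS
end
end

section
/- Let α > 0 and let (M₋₁, M₀, M₁) be ℝ^d-valued random vectors with ‖M₀‖ = 1 a.s., such that law(M₀, M₁) ∈ M_α and such that for every bounded measurable f : ℝ^d × ℝ^d → ℝ with f(y₀, y₁) = 0 whenever y₀ = 0, one has E[f(M₋₁, M₀)] = E[f(M₀/‖M₁‖, M₁/‖M₁‖) ‖M₁‖^α 1_{{M₁ ≠ 0}}]. Then the law of (M₀, M₋₁) equals the adjoint measure of the law of (M₀, M₁) in M_α. -/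
open MeasureTheory Filter Set
open scoped ENNReal Topology Classical

noncomputable section

/-!
Test the time-change identity against `f (y₀, y₁) = 1_E (y₁, y₀)` for Borel
`E ⊆ S^{d-1} × (ℝ^d ∖ {0})`, which vanishes when `y₀ = 0`. Its left side becomes
`law (M₀, M₋₁) (E)` and its right side the integral defining `P*(E)`; the latter is finite
because admissibility of `P` bounds it by `P (S^{d-1} × ℝ^d)`. For `E = S × (ℝ^d ∖ {0})` that
integral is the directional mass of `S`, as `M₀ ≠ 0` a.s.; since `(M₀, M₋₁)` and `(M₀, M₁)`
have the same first marginal, `P*(S × {0})` follows by subtraction.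
-/

section

variable {d : ℕ}

def timeShift (p : Ed d × Ed d) : Ed d × Ed d := (‖p.2‖⁻¹ • p.2, ‖p.2‖⁻¹ • p.1)

@[fun_prop]
lemma measurable_timeShift : Measurable (timeShift (d := d)) := by
  unfold timeShift
  fun_prop

lemma measurableSet_timeShift_mem {E : Set (Ed d × Ed d)} (hE : MeasurableSet E) :
    MeasurableSet {p : Ed d × Ed d | p.2 ≠ 0 ∧ timeShift p ∈ E} :=
  (measurableSet_singleton 0).compl.preimage measurable_snd |>.inter
    (hE.preimage measurable_timeShift)

def adjointMass (α : ℝ) (P : Measure (Ed d × Ed d)) (E : Set (Ed d × Ed d)) : ℝ≥0∞ :=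
  ∫⁻ p, {p : Ed d × Ed d | p.2 ≠ 0 ∧ timeShift p ∈ E}.indicator
    (fun p => ENNReal.ofReal (‖p.2‖ ^ α)) p ∂P

lemma adjointMass_le_dirMass_unitSphere (α : ℝ) (P : Measure (Ed d × Ed d))
    (E : Set (Ed d × Ed d)) : adjointMass α P E ≤ dirMass d α P (unitSphere d) := by
  refine lintegral_mono fun p => indicator_le_indicator_of_subset ?_ (fun _ => zero_le) p
  rintro p ⟨hp, -⟩
  refine ⟨hp, ?_⟩
  simp [unitSphere, norm_smul, hp]

lemma adjointMass_prod_compl_zero {α : ℝ} {P : Measure (Ed d × Ed d)}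
    (hP : ∀ᵐ p ∂P, p.1 ≠ 0) (S : Set (Ed d)) :
    adjointMass α P (S ×ˢ {0}ᶜ) = dirMass d α P S := by
  refine lintegral_congr_ae (hP.mono fun p hp => ?_)
  by_cases h2 : p.2 = 0 <;> simp [indicator_apply, timeShift, hp, h2]

lemma MemMalpha.dirMass_lt_top {α : ℝ} {P : Measure (Ed d × Ed d)} (hP : MemMalpha d α P)
    {S : Set (Ed d)} (hS : MeasurableSet S) (hSsub : S ⊆ unitSphere d) :
    dirMass d α P S < ⊤ :=
  have := hP.prob
  (hP.adm S hS hSsub).trans_lt (measure_lt_top _ _)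

lemma MemMalpha.adjointMass_lt_top {α : ℝ} {P : Measure (Ed d × Ed d)} (hP : MemMalpha d α P)
    (E : Set (Ed d × Ed d)) : adjointMass α P E < ⊤ :=
  (adjointMass_le_dirMass_unitSphere α P E).trans_lt
    (hP.dirMass_lt_top Metric.isClosed_sphere.measurableSet subset_rfl)

lemma integral_timeShift_indicator (α : ℝ) (P : Measure (Ed d × Ed d))
    {E : Set (Ed d × Ed d)} (hE : MeasurableSet E) :
    ∫ p, (if p.2 ≠ 0 then E.indicator 1 (timeShift p) * ‖p.2‖ ^ α else 0) ∂P
      = (adjointMass α P E).toReal := by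
  rw [adjointMass, ← integral_toReal ((Measurable.ennreal_ofReal (by fun_prop)).indicator
    (measurableSet_timeShift_mem hE)).aemeasurable (ae_of_all _ fun p => ?_)]
  · refine integral_congr_ae (ae_of_all _ fun p => ?_)
    by_cases h2 : p.2 = 0 <;> by_cases hp : timeShift p ∈ E <;>
      simp [*, ENNReal.toReal_ofReal, Real.rpow_nonneg]
  · unfold indicator
    split_ifs <;> simp

lemma measure_prod_eq_sub_measure_prod_compl {β γ : Type*} [MeasurableSpace β]
    [MeasurableSpace γ] (Q : Measure (β × γ)) {S : Set β} {t : Set γ} (hS : MeasurableSet S)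
    (ht : MeasurableSet tᶜ) (hfin : Q (S ×ˢ tᶜ) ≠ ⊤) :
    Q (S ×ˢ t) = Q (S ×ˢ univ) - Q (S ×ˢ tᶜ) := by
  rw [← measure_sdiff (prod_mono subset_rfl (subset_univ _)) (hS.prod ht).nullMeasurableSet hfin]
  congr 1
  ext ⟨b, c⟩
  by_cases hc : c ∈ t <;> simp [hc]

variable {Ω : Type*} [MeasurableSpace Ω]

lemma map_prodMk_apply_prod_univ {β γ : Type*} [MeasurableSpace β] [MeasurableSpace γ]
    (ν : Measure Ω) (X : Ω → β) {Y : Ω → γ} (hY : Measurable Y) {S : Set β}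
    (hS : MeasurableSet S) : ν.map (fun ω => (X ω, Y ω)) (S ×ˢ univ) = ν.map X S := by
  rw [prod_univ, ← Measure.fst_apply hS, Measure.fst_map_prodMk hY]

def TimeChangeIdentity (α : ℝ) (ν : Measure Ω) (Mm1 M0 M1 : Ω → Ed d) : Prop :=
  ∀ f : Ed d × Ed d → ℝ, Measurable f → (∃ C : ℝ, ∀ y, |f y| ≤ C) →
    (∀ y : Ed d × Ed d, y.1 = 0 → f y = 0) →
    ∫ ω, f (Mm1 ω, M0 ω) ∂ν
      = ∫ ω, (if M1 ω ≠ 0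
          then f (‖M1 ω‖⁻¹ • M0 ω, ‖M1 ω‖⁻¹ • M1 ω) * ‖M1 ω‖ ^ α
          else 0) ∂ν

theorem TimeChangeIdentity.map_apply_eq_adjointMass {α : ℝ} {ν : Measure Ω}
    [IsFiniteMeasure ν] {Mm1 M0 M1 : Ω → Ed d} (hTC : TimeChangeIdentity α ν Mm1 M0 M1)
    (hMm1 : Measurable Mm1) (hM0 : Measurable M0) (hM1 : Measurable M1)
    (hadm : MemMalpha d α (ν.map fun ω => (M0 ω, M1 ω)))
    {E : Set (Ed d × Ed d)} (hE : MeasurableSet E) (hE0 : E ⊆ univ ×ˢ {0}ᶜ) :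
    ν.map (fun ω => (M0 ω, Mm1 ω)) E = adjointMass α (ν.map fun ω => (M0 ω, M1 ω)) E := by
  have hf := hTC (E.indicator 1 ∘ Prod.swap)
    ((measurable_one.indicator hE).comp measurable_swap)
    ⟨1, fun y => by by_cases h : y.swap ∈ E <;> simp [h]⟩
    (fun y hy => indicator_of_notMem (fun h => (hE0 h).2 (by simpa using hy)) _)
  have hlhs : ∫ ω, (E.indicator 1 ∘ Prod.swap) (Mm1 ω, M0 ω) ∂ν
      = (ν.map fun ω => (M0 ω, Mm1 ω)).real E := by
    rw [map_measureReal_apply (hM0.prodMk hMm1) hE,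
      ← integral_indicator_one (hE.preimage (hM0.prodMk hMm1))]
    rfl
  have hrhs : ∫ ω, (if M1 ω ≠ 0
        then (E.indicator 1 ∘ Prod.swap) (‖M1 ω‖⁻¹ • M0 ω, ‖M1 ω‖⁻¹ • M1 ω) * ‖M1 ω‖ ^ α
        else 0) ∂ν = (adjointMass α (ν.map fun ω => (M0 ω, M1 ω)) E).toReal := by
    rw [← integral_timeShift_indicator α _ hE, integral_map (hM0.prodMk hM1).aemeasurable
      (Measurable.ite (p := fun p : Ed d × Ed d => p.2 ≠ 0)
        ((measurableSet_singleton 0).compl.preimage measurable_snd)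
        (by fun_prop) measurable_const).aestronglyMeasurable]
    rfl
  rw [hlhs, hrhs] at hf
  exact (ENNReal.toReal_eq_toReal_iff' (measure_ne_top _ _) (hadm.adjointMass_lt_top E).ne).1 hf

end

theorem backward_law_is_adjoint_general
    {d : ℕ} {α : ℝ}
    {Ω : Type*} [MeasurableSpace Ω] (ν : Measure Ω) [IsProbabilityMeasure ν]
    (Mm1 M0 M1 : Ω → Ed d)
    (hMm1 : Measurable Mm1) (hM0 : Measurable M0) (hM1 : Measurable M1)
    (hnorm : ∀ᵐ ω ∂ν, ‖M0 ω‖ = 1)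
    (hadm : MemMalpha d α (ν.map fun ω => (M0 ω, M1 ω)))
    (hTC : ∀ f : Ed d × Ed d → ℝ, Measurable f → (∃ C : ℝ, ∀ y, |f y| ≤ C) →
      (∀ y : Ed d × Ed d, y.1 = 0 → f y = 0) →
      ∫ ω, f (Mm1 ω, M0 ω) ∂ν
        = ∫ ω, (if M1 ω ≠ 0
            then f (‖M1 ω‖⁻¹ • M0 ω, ‖M1 ω‖⁻¹ • M1 ω) * ‖M1 ω‖ ^ α
            else 0) ∂ν) :
    IsAdjoint d α (ν.map fun ω => (M0 ω, M1 ω)) (ν.map fun ω => (M0 ω, Mm1 ω)) := by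
  set P := ν.map fun ω => (M0 ω, M1 ω)
  set Q := ν.map fun ω => (M0 ω, Mm1 ω)
  have key {E : Set (Ed d × Ed d)} (hE : MeasurableSet E) (hE0 : E ⊆ univ ×ˢ {0}ᶜ) :
      Q E = adjointMass α P E :=
    TimeChangeIdentity.map_apply_eq_adjointMass hTC hMm1 hM0 hM1 hadm hE hE0
  have hnonzero : MeasurableSet ({0}ᶜ : Set (Ed d)) := (measurableSet_singleton 0).compl
  refine ⟨?_, fun S hS hSsub => ?_,
    fun E hE hE0 => key hE (hE0.trans (prod_mono (subset_univ _) subset_rfl))⟩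
  · have hsphere : MeasurableSet {x : Ed d | ‖x‖ = 1} :=
      measurableSet_eq_fun (by fun_prop) (by fun_prop)
    exact (Measure.map_apply (hM0.prodMk hMm1) (hsphere.compl.preimage measurable_fst)).trans
      (ae_iff.1 hnorm)
  · have hP : ∀ᵐ p ∂P, p.1 ≠ 0 :=
      (ae_map_iff (hM0.prodMk hM1).aemeasurable (hnonzero.preimage measurable_fst)).2
        (hnorm.mono fun ω h => norm_ne_zero_iff.1 (h ▸ one_ne_zero))
    have hpos : Q (S ×ˢ {0}ᶜ) = dirMass d α P S :=
      (key (hS.prod hnonzero) (prod_mono (subset_univ _) subset_rfl)).trans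
        (adjointMass_prod_compl_zero hP S)
    have hfst : Q (S ×ˢ univ) = P (S ×ˢ univ) := by
      rw [map_prodMk_apply_prod_univ ν M0 hMm1 hS, map_prodMk_apply_prod_univ ν M0 hM1 hS]
    rw [measure_prod_eq_sub_measure_prod_compl Q hS hnonzero
      (hpos ▸ (hadm.dirMass_lt_top hS hSsub).ne), hfst, hpos]

/-- Lemma 4.3 (second part): if `(M₋₁, M₀, M₁)` satisfies the one-step time-change
identity `E[f(M₋₁, M₀)] = E[f(M₀/‖M₁‖, M₁/‖M₁‖) ‖M₁‖^α 1_{M₁ ≠ 0}]` for all bounded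
measurable `f` vanishing in the first coordinate at `0`, and `law (M₀, M₁) ∈ M_α`,
then `law (M₀, M₋₁)` is the adjoint of `law (M₀, M₁)` in `M_α`. -/
theorem backward_law_is_adjoint
    {d : ℕ} {α : ℝ} (hα : 0 < α)
    {Ω : Type*} [MeasurableSpace Ω] (ν : Measure Ω) [IsProbabilityMeasure ν]
    (Mm1 M0 M1 : Ω → Ed d)
    (hMm1 : Measurable Mm1) (hM0 : Measurable M0) (hM1 : Measurable M1)
    (hnorm : ∀ᵐ ω ∂ν, ‖M0 ω‖ = 1)
    (hadm : MemMalpha d α (ν.map fun ω => (M0 ω, M1 ω)))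
    (hTC : ∀ f : Ed d × Ed d → ℝ, Measurable f → (∃ C : ℝ, ∀ y, |f y| ≤ C) →
      (∀ y : Ed d × Ed d, y.1 = 0 → f y = 0) →
      ∫ ω, f (Mm1 ω, M0 ω) ∂ν
        = ∫ ω, (if M1 ω ≠ 0
            then f (‖M1 ω‖⁻¹ • M0 ω, ‖M1 ω‖⁻¹ • M1 ω) * ‖M1 ω‖ ^ α
            else 0) ∂ν) :
    IsAdjoint d α (ν.map fun ω => (M0 ω, M1 ω)) (ν.map fun ω => (M0 ω, Mm1 ω)) :=
  backward_law_is_adjoint_general ν Mm1 M0 M1 hMm1 hM0 hM1 hnorm hadm hTC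
end
end

section
/- Let α > 0 and let C, R, Q be independent random elements with C taking values in S^{d−1}, R a positive random variable with E[R^α] = 1, and Q a random orthogonal d × d matrix (Q' = Q^{−1} a.s.), such that law(QC) = law(C). Then the law P of (C, R·Q·C) belongs to M_α, satisfies ∫ ‖m‖^α P(ds, dm) = 1, and its adjoint measure satisfies P*(S × T) = E[1_S(QC) 1_T(C/R) R^α] for all Borel sets S ⊆ S^{d−1} and T ⊆ ℝ^d \ {0}. -/
open MeasureTheory Filter Set
open scoped ENNReal Topology Classical

noncomputable section

/-- Borel measurable structure on `d × d` real matrices (entrywise). -/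
instance (d : ℕ) : MeasurableSpace (Matrix (Fin d) (Fin d) ℝ) :=
  show MeasurableSpace (Fin d → Fin d → ℝ) from inferInstance

/-- Multiplication of a `d × d` matrix with a vector of `ℝ^d` (Euclidean space). -/
def mulVecE {d : ℕ} (A : Matrix (Fin d) (Fin d) ℝ) (v : Ed d) : Ed d :=
  (WithLp.equiv 2 (Fin d → ℝ)).symm (A.mulVec ((WithLp.equiv 2 (Fin d → ℝ)) v))


/-! Put `X = Q C`. Orthogonality of `Q` gives `‖X‖ = 1` a.s., so `m = R • X` has `‖m‖ = R`,
`m / ‖m‖ = X` and `C / ‖m‖ = C / R`; this turns every integral against `P` into an expectation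
over `ω`, which gives the total mass and the adjoint formula. For admissibility, `X` is a function
of `(Q, C)`, hence independent of `R`, so `E[1_S(X) R^α] = P(X ∈ S) E[R^α] = P(X ∈ S) = P(C ∈ S)`
because `law (Q C) = law C`: the defining inequality of `M_α` holds with equality. -/

open ProbabilityTheory

lemma norm_mulVecE_of_transpose_mul_self {d : ℕ} {A : Matrix (Fin d) (Fin d) ℝ}
    (hA : A.transpose * A = 1) (v : Ed d) : ‖mulVecE A v‖ = ‖v‖ :=
  ContinuousLinearMap.norm_map_of_mem_unitary
    (Unitary.map_mem (Matrix.toEuclideanCLM (n := Fin d) (𝕜 := ℝ))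
      ((Matrix.mem_orthogonalGroup_iff' (Fin d) ℝ).2 hA)) v

lemma measurable_mulVecE {d : ℕ} :
    Measurable fun x : Matrix (Fin d) (Fin d) ℝ × Ed d => mulVecE x.1 x.2 := by
  have : BorelSpace (Matrix (Fin d) (Fin d) ℝ) :=
    inferInstanceAs (BorelSpace (Fin d → Fin d → ℝ))
  exact ((PiLp.continuous_toLp 2 _).comp (continuous_fst.matrix_mulVec
    ((PiLp.continuous_ofLp 2 _).comp continuous_snd))).measurable

section Independence

variable {Ω α β γ : Type*} [MeasurableSpace Ω] [MeasurableSpace α] [MeasurableSpace β]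
  [MeasurableSpace γ] {ν : Measure Ω} {X : Ω → α} {Y : Ω → β} {Z : Ω → γ}

lemma indepFun_prodMk_of_map_eq_prod [IsProbabilityMeasure ν] (hX : Measurable X)
    (hY : Measurable Y) (hZ : Measurable Z)
    (h : ν.map (fun ω => (X ω, Y ω, Z ω)) = (ν.map X).prod ((ν.map Y).prod (ν.map Z))) :
    IndepFun (fun ω => (X ω, Z ω)) Y ν := by
  have hXYZ : Measurable fun ω => (X ω, Y ω, Z ω) := hX.prodMk (hY.prodMk hZ)
  have := Measure.isProbabilityMeasure_map (μ := ν) hY.aemeasurable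
  have hXZ : ν.map (fun ω => (X ω, Z ω)) = (ν.map X).prod (ν.map Z) := by
    rw [show (fun ω => (X ω, Z ω)) = Prod.map id Prod.snd ∘ fun ω => (X ω, Y ω, Z ω) from rfl,
      ← Measure.map_map (measurable_id.prodMap measurable_snd) hXYZ, h,
      ← Measure.map_prod_map _ _ measurable_id measurable_snd, Measure.map_id,
      Measure.map_snd_prod, measure_univ, one_smul]
  rw [indepFun_iff_map_prod_eq_prod_map_map (hX.prodMk hZ).aemeasurable hY.aemeasurable, hXZ,
    show (fun ω => ((X ω, Z ω), Y ω)) = (MeasurableEquiv.prodAssoc.symm ∘ Prod.map id Prod.swap)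
      ∘ fun ω => (X ω, Y ω, Z ω) from rfl,
    ← Measure.map_map (MeasurableEquiv.prodAssoc.symm.measurable.comp
      (measurable_id.prodMap measurable_swap)) hXYZ, h,
    ← Measure.map_map MeasurableEquiv.prodAssoc.symm.measurable
      (measurable_id.prodMap measurable_swap),
    ← Measure.map_prod_map _ _ measurable_id measurable_swap, Measure.map_id, Measure.prod_swap,
    (measurePreserving_prodAssoc _ _ _).symm.map_eq]

lemma setLIntegral_preimage_eq_measure_mul_of_indepFun (hX : Measurable X)
    (hY : Measurable Y) (hXY : IndepFun X Y ν) {S : Set α} (hS : MeasurableSet S)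
    {g : β → ℝ≥0∞} (hg : Measurable g) :
    ∫⁻ ω in X ⁻¹' S, g (Y ω) ∂ν = ν (X ⁻¹' S) * ∫⁻ ω, g (Y ω) ∂ν := by
  calc ∫⁻ ω in X ⁻¹' S, g (Y ω) ∂ν
        = ∫⁻ ω, ((S.indicator (1 : α → ℝ≥0∞) ∘ X) * (g ∘ Y)) ω ∂ν := by
        rw [← lintegral_indicator (hX hS)]
        congr 1 with ω
        by_cases hω : X ω ∈ S <;> simp [hω]
    _ = (∫⁻ ω, (S.indicator 1 ∘ X) ω ∂ν) * ∫⁻ ω, g (Y ω) ∂ν :=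
        lintegral_mul_eq_lintegral_mul_lintegral_of_indepFun
          ((measurable_one.indicator hS).comp hX) (hg.comp hY)
          (hXY.comp (measurable_one.indicator hS) hg)
    _ = ν (X ⁻¹' S) * ∫⁻ ω, g (Y ω) ∂ν := by
        rw [← lintegral_indicator_one (hX hS)]
        rfl

end Independence

section Polar

variable {V : Type*} [NormedAddCommGroup V] [NormedSpace ℝ V]

lemma norm_smul_of_norm_eq_one {r : ℝ} (hr : 0 ≤ r) {u : V} (hu : ‖u‖ = 1) : ‖r • u‖ = r := by
  rw [norm_smul_of_nonneg hr, hu, mul_one]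

variable [MeasurableSpace V] [BorelSpace V] [SecondCountableTopology V]
  {Ω : Type*} [MeasurableSpace Ω] {ν : Measure Ω} {C X : Ω → V} {R : Ω → ℝ}

lemma measurableSet_polar {E : Set (V × V)} (hE : MeasurableSet E) :
    MeasurableSet {p : V × V | p.2 ≠ 0 ∧ (‖p.2‖⁻¹ • p.2, ‖p.2‖⁻¹ • p.1) ∈ E} :=
  (measurable_snd (measurableSet_singleton 0)).compl.inter
    (((measurable_snd.norm.inv.smul measurable_snd).prodMk
      (measurable_snd.norm.inv.smul measurable_fst)) hE)

lemma lintegral_polar_indicator_map (hC : Measurable C) (hX : Measurable X) (hR : Measurable R)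
    (hXnorm : ∀ᵐ ω ∂ν, ‖X ω‖ = 1) (hRpos : ∀ ω, 0 < R ω) (α : ℝ)
    {E : Set (V × V)} (hE : MeasurableSet E) :
    ∫⁻ p, {p : V × V | p.2 ≠ 0 ∧ (‖p.2‖⁻¹ • p.2, ‖p.2‖⁻¹ • p.1) ∈ E}.indicator
        (fun p => ENNReal.ofReal (‖p.2‖ ^ α)) p ∂(ν.map fun ω => (C ω, R ω • X ω))
      = ∫⁻ ω, {ω | (X ω, (R ω)⁻¹ • C ω) ∈ E}.indicator
        (fun ω => ENNReal.ofReal (R ω ^ α)) ω ∂ν := by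
  have hP : Measurable fun ω => (C ω, R ω • X ω) := hC.prodMk (hR.smul hX)
  rw [lintegral_map ((Measurable.ennreal_ofReal (measurable_snd.norm.pow_const α)).indicator
    (measurableSet_polar hE)) hP]
  refine lintegral_congr_ae (hXnorm.mono fun ω hω => ?_)
  have hnorm : ‖R ω • X ω‖ = R ω := norm_smul_of_norm_eq_one (hRpos ω).le hω
  have hne : R ω • X ω ≠ 0 := norm_ne_zero_iff.1 (hnorm.trans_ne (hRpos ω).ne')
  simp only [Set.indicator, Set.mem_ofPred_eq, hnorm, smul_smul, inv_mul_cancel₀ (hRpos ω).ne',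
    one_smul, ne_eq, hne, not_false_eq_true, true_and]

lemma lintegral_rpow_norm_map (hC : Measurable C) (hX : Measurable X) (hR : Measurable R)
    (hXnorm : ∀ᵐ ω ∂ν, ‖X ω‖ = 1) (hRpos : ∀ ω, 0 < R ω) (α : ℝ) :
    ∫⁻ p, ENNReal.ofReal (‖p.2‖ ^ α) ∂(ν.map fun ω => (C ω, R ω • X ω))
      = ∫⁻ ω, ENNReal.ofReal (R ω ^ α) ∂ν := by
  have hP : Measurable fun ω => (C ω, R ω • X ω) := hC.prodMk (hR.smul hX)
  rw [lintegral_map (Measurable.ennreal_ofReal (measurable_snd.norm.pow_const α)) hP]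
  refine lintegral_congr_ae (hXnorm.mono fun ω hω => ?_)
  dsimp only
  rw [norm_smul_of_norm_eq_one (hRpos ω).le hω]

end Polar

theorem multiplicative_example_adjoint_general
    {d : ℕ} {α : ℝ}
    {Ω : Type*} [MeasurableSpace Ω] (ν : Measure Ω) [IsProbabilityMeasure ν]
    (C : Ω → Ed d) (R : Ω → ℝ) (Q : Ω → Matrix (Fin d) (Fin d) ℝ)
    (hC : Measurable C) (hR : Measurable R) (hQ : Measurable Q)
    (hCsphere : ∀ ω, ‖C ω‖ = 1)
    (hRpos : ∀ ω, 0 < R ω)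
    (hRmoment : ∫ ω, R ω ^ α ∂ν = 1)
    (hQorth : ∀ᵐ ω ∂ν, (Q ω).transpose * Q ω = 1)
    -- C, R, Q independent :
    (hindep : ν.map (fun ω => (C ω, R ω, Q ω))
      = (ν.map C).prod ((ν.map R).prod (ν.map Q)))
    -- law (Q C) = law C :
    (hQC : ν.map (fun ω => mulVecE (Q ω) (C ω)) = ν.map C) :
    MemMalpha d α (ν.map fun ω => (C ω, R ω • mulVecE (Q ω) (C ω))) ∧
    (∫⁻ p, ENNReal.ofReal (‖p.2‖ ^ α)
        ∂(ν.map fun ω => (C ω, R ω • mulVecE (Q ω) (C ω))) = 1) ∧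
    ∀ P' : Measure (Ed d × Ed d),
      IsAdjoint d α (ν.map fun ω => (C ω, R ω • mulVecE (Q ω) (C ω))) P' →
      ∀ S T : Set (Ed d), MeasurableSet S → S ⊆ unitSphere d →
        MeasurableSet T → (0 : Ed d) ∉ T →
        P' (S ×ˢ T) = ∫⁻ ω, Set.indicator
            {ω | mulVecE (Q ω) (C ω) ∈ S ∧ (R ω)⁻¹ • C ω ∈ T}
            (fun ω => ENNReal.ofReal (R ω ^ α)) ω ∂ν := by
  set X := fun ω => mulVecE (Q ω) (C ω)
  set P := ν.map fun ω => (C ω, R ω • X ω)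
  have hX : Measurable X := measurable_mulVecE.comp (hQ.prodMk hC)
  have hP : Measurable fun ω => (C ω, R ω • X ω) := hC.prodMk (hR.smul hX)
  have hXnorm : ∀ᵐ ω ∂ν, ‖X ω‖ = 1 := hQorth.mono fun ω hω =>
    (norm_mulVecE_of_transpose_mul_self hω (C ω)).trans (hCsphere ω)
  have hRα : ∫⁻ ω, ENNReal.ofReal (R ω ^ α) ∂ν = 1 := by
    rw [← ofReal_integral_eq_lintegral_ofReal (.of_integral_ne_zero (by simp [hRmoment]))
      (ae_of_all _ fun ω => (Real.rpow_pos_of_pos (hRpos ω) α).le), hRmoment, ENNReal.ofReal_one]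
  have hXR : IndepFun X R ν := (indepFun_prodMk_of_map_eq_prod hC hR hQ hindep).comp
    (measurable_mulVecE.comp measurable_swap) measurable_id
  have hdirMass : ∀ S, MeasurableSet S → dirMass d α P S = P (S ×ˢ univ) := by
    intro S hS
    calc dirMass d α P S
        = ∫⁻ p, {p : Ed d × Ed d | p.2 ≠ 0 ∧ (‖p.2‖⁻¹ • p.2, ‖p.2‖⁻¹ • p.1) ∈ S ×ˢ univ}.indicator
            (fun p => ENNReal.ofReal (‖p.2‖ ^ α)) p ∂P := by
          simp only [dirMass, Set.mem_prod, Set.mem_univ, and_true]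
      _ = ∫⁻ ω in X ⁻¹' S, ENNReal.ofReal (R ω ^ α) ∂ν := by
          rw [lintegral_polar_indicator_map hC hX hR hXnorm hRpos α (hS.prod .univ),
            ← lintegral_indicator (hX hS)]
          simp only [Set.mem_prod, Set.mem_univ, and_true]
          rfl
      _ = ν (X ⁻¹' S) := by
          rw [setLIntegral_preimage_eq_measure_mul_of_indepFun
            (g := fun r => ENNReal.ofReal (r ^ α)) hX hR hXR hS (by fun_prop), hRα, mul_one]
      _ = ν (C ⁻¹' S) := by rw [← Measure.map_apply hX hS, hQC, Measure.map_apply hC hS]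
      _ = P (S ×ˢ univ) := by
          rw [Measure.map_apply hP (hS.prod .univ), Set.mk_preimage_prod, Set.preimage_univ,
            Set.inter_univ]
  refine ⟨⟨Measure.isProbabilityMeasure_map hP.aemeasurable, ?_, fun S hS _ => (hdirMass S hS).le⟩,
    ?_, ?_⟩
  · rw [Measure.map_apply hP (show MeasurableSet {p : Ed d × Ed d | ‖p.1‖ = 1} from
      measurable_fst.norm (measurableSet_singleton 1))]
    simp [hCsphere]
  · rw [lintegral_rpow_norm_map hC hX hR hXnorm hRpos α, hRα]
  · intro P' hP' S T hS hSsub hT h0T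
    rw [hP'.eq_pos _ (hS.prod hT) (prod_mono hSsub fun m hm => ne_of_mem_of_not_mem hm h0T),
      lintegral_polar_indicator_map hC hX hR hXnorm hRpos α (hS.prod hT)]
    rfl

/-- Example 4.4 (first part): let `C`, `R`, `Q` be independent with `C` taking values
in `S^{d-1}`, `R > 0` with `E[R^α] = 1`, and `Q` a random orthogonal matrix with
`law (Q C) = law C`.  Then the law `P` of `(C, R • Q C)` belongs to `M_α`, satisfies
`∫ ‖m‖^α P(ds, dm) = 1`, and its adjoint satisfies
`P*(S × T) = E[1_S(Q C) 1_T(C / R) R^α]` for Borel `S ⊆ S^{d-1}` and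
`T ⊆ ℝ^d \ {0}`. -/
theorem multiplicative_example_adjoint
    {d : ℕ} {α : ℝ} (hα : 0 < α)
    {Ω : Type*} [MeasurableSpace Ω] (ν : Measure Ω) [IsProbabilityMeasure ν]
    (C : Ω → Ed d) (R : Ω → ℝ) (Q : Ω → Matrix (Fin d) (Fin d) ℝ)
    (hC : Measurable C) (hR : Measurable R) (hQ : Measurable Q)
    (hCsphere : ∀ ω, ‖C ω‖ = 1)
    (hRpos : ∀ ω, 0 < R ω)
    (hRmoment : ∫ ω, R ω ^ α ∂ν = 1)
    (hQorth : ∀ᵐ ω ∂ν, (Q ω).transpose * Q ω = 1)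
    -- C, R, Q independent :
    (hindep : ν.map (fun ω => (C ω, R ω, Q ω))
      = (ν.map C).prod ((ν.map R).prod (ν.map Q)))
    -- law (Q C) = law C :
    (hQC : ν.map (fun ω => mulVecE (Q ω) (C ω)) = ν.map C) :
    MemMalpha d α (ν.map fun ω => (C ω, R ω • mulVecE (Q ω) (C ω))) ∧
    (∫⁻ p, ENNReal.ofReal (‖p.2‖ ^ α)
        ∂(ν.map fun ω => (C ω, R ω • mulVecE (Q ω) (C ω))) = 1) ∧
    ∀ P' : Measure (Ed d × Ed d),
      IsAdjoint d α (ν.map fun ω => (C ω, R ω • mulVecE (Q ω) (C ω))) P' →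
      ∀ S T : Set (Ed d), MeasurableSet S → S ⊆ unitSphere d →
        MeasurableSet T → (0 : Ed d) ∉ T →
        P' (S ×ˢ T) = ∫⁻ ω, Set.indicator
            {ω | mulVecE (Q ω) (C ω) ∈ S ∧ (R ω)⁻¹ • C ω ∈ T}
            (fun ω => ENNReal.ofReal (R ω ^ α)) ω ∂ν :=
  multiplicative_example_adjoint_general ν C R Q hC hR hQ hCsphere hRpos hRmoment hQorth hindep hQC
end
end

section
/- Let α > 0, let A be a (deterministic) d × d real matrix and λ a probability measure on S^{d−1}. Set c_n = ∫_{S^{d−1}} ‖A^n s‖^α λ(ds) for n ∈ ℕ₀ and assume 0 < Σ_{n≥0} c_n < ∞ (note c₀ = 1). Let Υ be the probability measure on S^{d−1} defined by Υ(f) = (Σ_k c_k)^{−1} Σ_{n≥0} ∫_{S^{d−1}} 1_{{A^n s ≠ 0}} f(A^n s/‖A^n s‖) ‖A^n s‖^α λ(ds) for bounded measurable f, let M₀ ∼ Υ and M₁ = A M₀, and let P be the law of (M₀, M₁). Then P ∈ M_α and the adjoint measure satisfies P*(S × {0}) = λ(S)/(Σ_k c_k) for every Borel set S ⊆ S^{d−1}.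 -/
open MeasureTheory Filter Set
open scoped ENNReal Topology Classical

noncomputable section

/-!
Write `w_S = dirWeight α S`, i.e. `w_S(v) = 1_{v ≠ 0} 1_S(v/‖v‖) ‖v‖^α`, so that
`(Σ c)·Υ(S) = Σₙ ∫ w_S(Aⁿ s) λ(ds)`. Since `w_S` is `α`-homogeneous, integrating `w_S(A v)`
against this series measure shifts the series by one step:
`∫ w_S(A v) (Σ c)Υ(dv) = Σₙ ∫ w_S(Aⁿ⁺¹ s) λ(ds)`. The left side is `(Σ c)·dirMass P S`, and
what remains of the series is its `n = 0` term, which is `λ(S)` because `λ` lives on the sphere.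
Hence `P(S × ℝ^d) = λ(S)/Σ c + dirMass P S`, which gives admissibility and, by subtraction,
the mass of `P*` at `S × {0}`.
-/

section DirWeight

variable {E : Type*} [NormedAddCommGroup E] [NormedSpace ℝ E]

def dirWeight (α : ℝ) (S : Set E) : E → ℝ≥0∞ :=
  {v | v ≠ 0 ∧ ‖v‖⁻¹ • v ∈ S}.indicator fun v => ENNReal.ofReal (‖v‖ ^ α)

variable {α : ℝ} {S : Set E}

@[simp]
lemma dirWeight_zero : dirWeight α S (0 : E) = 0 := by
  simp [dirWeight]

lemma dirWeight_univ (hα : α ≠ 0) (v : E) : dirWeight α univ v = ENNReal.ofReal (‖v‖ ^ α) := by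
  by_cases hv : v = 0
  · simp [hv, Real.zero_rpow hα]
  · simp [dirWeight, hv]

lemma dirWeight_compl_sphere (v : E) : dirWeight α (Metric.sphere 0 1)ᶜ v = 0 := by
  refine indicator_of_notMem (fun h => h.2 ?_) _
  rw [mem_sphere_zero_iff_norm, norm_smul, norm_inv, norm_norm,
    inv_mul_cancel₀ (norm_ne_zero_iff.mpr h.1)]

lemma dirWeight_of_norm_eq_one {v : E} (hv : ‖v‖ = 1) : dirWeight α S v = S.indicator 1 v := by
  have hv0 : v ≠ 0 := norm_ne_zero_iff.mp (by rw [hv]; exact one_ne_zero)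
  simp [dirWeight, indicator_apply, hv, hv0]

lemma dirWeight_smul {t : ℝ} (ht : 0 < t) (v : E) :
    dirWeight α S (t • v) = ENNReal.ofReal (t ^ α) * dirWeight α S v := by
  have hdir : ‖t • v‖⁻¹ • t • v = ‖v‖⁻¹ • v := by
    rw [norm_smul, Real.norm_of_nonneg ht.le, smul_smul]
    field_simp
  have hnorm : ‖t • v‖ ^ α = t ^ α * ‖v‖ ^ α := by
    rw [norm_smul, Real.norm_of_nonneg ht.le, Real.mul_rpow ht.le (norm_nonneg v)]
  simp only [dirWeight, indicator_apply, mem_ofPred_eq, smul_ne_zero_iff, hdir, hnorm,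
    ENNReal.ofReal_mul (Real.rpow_nonneg ht.le α)]
  split_ifs <;> simp_all

lemma indicator_normalize_mul_rpow (hα : α ≠ 0) (v : E) :
    S.indicator 1 (‖v‖⁻¹ • v) * ENNReal.ofReal (‖v‖ ^ α) = dirWeight α S v := by
  by_cases hv : v = 0
  · simp [hv, Real.zero_rpow hα]
  · simp [dirWeight, indicator_apply, hv]

lemma dirWeight_map_normalize_mul_rpow {F : Type*} [NormedAddCommGroup F] [NormedSpace ℝ F]
    {S : Set F} (L : E →ₗ[ℝ] F) (v : E) :
    dirWeight α S (L (‖v‖⁻¹ • v)) * ENNReal.ofReal (‖v‖ ^ α) = dirWeight α S (L v) := by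
  by_cases hv : v = 0
  · simp [hv]
  · have hpos : 0 < ‖v‖ := norm_pos_iff.mpr hv
    rw [map_smul, dirWeight_smul (inv_pos.mpr hpos), mul_right_comm,
      ← ENNReal.ofReal_mul (Real.rpow_nonneg (inv_nonneg.mpr hpos.le) α),
      ← Real.mul_rpow (inv_nonneg.mpr hpos.le) hpos.le, inv_mul_cancel₀ hpos.ne',
      Real.one_rpow, ENNReal.ofReal_one, one_mul]

variable [MeasurableSpace E]

lemma lintegral_dirWeight_of_ae_norm_eq_one {μ : Measure E} (hμ : ∀ᵐ v ∂μ, ‖v‖ = 1)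
    (hS : MeasurableSet S) : ∫⁻ v, dirWeight α S v ∂μ = μ S := by
  rw [← lintegral_indicator_one hS]
  exact lintegral_congr_ae (hμ.mono fun v hv => dirWeight_of_norm_eq_one hv)

variable [BorelSpace E] [SecondCountableTopology E]

lemma measurable_dirWeight (hS : MeasurableSet S) : Measurable (dirWeight α S) := by
  refine Measurable.indicator (by fun_prop) ?_
  exact (measurableSet_singleton 0).compl.inter ((measurable_norm.inv.smul measurable_id) hS)

end DirWeight

section DirSeries

variable {E : Type*} [NormedAddCommGroup E] [NormedSpace ℝ E] [MeasurableSpace E] [BorelSpace E]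
  [SecondCountableTopology E]

/-- `s ↦ Lⁿ s / ‖Lⁿ s‖` sends `ker Lⁿ` to `0`, but for `α ≠ 0` the density `‖Lⁿ s‖^α` vanishes
there, so no mass lands at the origin. -/
def dirSeriesMeasure (α : ℝ) (L : E →L[ℝ] E) (μ : Measure E) : Measure E :=
  Measure.sum fun n => (μ.withDensity fun s => ENNReal.ofReal (‖(L ^ n) s‖ ^ α)).map
    fun s => ‖(L ^ n) s‖⁻¹ • (L ^ n) s

variable {α : ℝ} {L : E →L[ℝ] E} {μ : Measure E} {S : Set E}

lemma lintegral_dirSeriesMeasure {f : E → ℝ≥0∞} (hf : Measurable f) :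
    ∫⁻ v, f v ∂dirSeriesMeasure α L μ =
      ∑' n, ∫⁻ s, f (‖(L ^ n) s‖⁻¹ • (L ^ n) s) * ENNReal.ofReal (‖(L ^ n) s‖ ^ α) ∂μ := by
  simp only [dirSeriesMeasure, lintegral_sum_measure]
  refine tsum_congr fun n => ?_
  rw [lintegral_map hf (by fun_prop),
    lintegral_withDensity_eq_lintegral_mul _ (by fun_prop) (by fun_prop)]
  simp only [Pi.mul_apply, mul_comm]

lemma dirSeriesMeasure_apply (hα : α ≠ 0) (hS : MeasurableSet S) :
    dirSeriesMeasure α L μ S = ∑' n, ∫⁻ s, dirWeight α S ((L ^ n) s) ∂μ := by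
  rw [← lintegral_indicator_one hS, lintegral_dirSeriesMeasure (measurable_one.indicator hS)]
  simp only [indicator_normalize_mul_rpow hα]

lemma dirSeriesMeasure_univ (hα : α ≠ 0) :
    dirSeriesMeasure α L μ univ = ∑' n, ∫⁻ s, ENNReal.ofReal (‖(L ^ n) s‖ ^ α) ∂μ := by
  simp only [dirSeriesMeasure_apply hα MeasurableSet.univ, dirWeight_univ hα]

lemma ae_norm_eq_one_dirSeriesMeasure (hα : α ≠ 0) : ∀ᵐ v ∂dirSeriesMeasure α L μ, ‖v‖ = 1 := by
  have hcompl : dirSeriesMeasure α L μ (Metric.sphere 0 1)ᶜ = 0 := by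
    simp [dirSeriesMeasure_apply hα Metric.isClosed_sphere.measurableSet.compl,
      dirWeight_compl_sphere]
  exact ae_iff.mpr (measure_mono_null (fun v hv => by simpa using hv) hcompl)

lemma lintegral_dirWeight_map_dirSeriesMeasure (hS : MeasurableSet S) :
    ∫⁻ v, dirWeight α S (L v) ∂dirSeriesMeasure α L μ =
      ∑' n, ∫⁻ s, dirWeight α S ((L ^ (n + 1)) s) ∂μ := by
  rw [lintegral_dirSeriesMeasure (f := fun v => dirWeight α S (L v))
    ((measurable_dirWeight hS).comp L.measurable)]
  simp only [pow_succ', mul_apply_eq_comp]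
  congr! with n s
  exact dirWeight_map_normalize_mul_rpow L.toLinearMap _

lemma dirSeriesMeasure_apply_eq_add (hα : α ≠ 0) (hS : MeasurableSet S) :
    dirSeriesMeasure α L μ S =
      ∫⁻ s, dirWeight α S s ∂μ + ∫⁻ v, dirWeight α S (L v) ∂dirSeriesMeasure α L μ := by
  rw [dirSeriesMeasure_apply hα hS, tsum_eq_zero_add' ENNReal.summable,
    lintegral_dirWeight_map_dirSeriesMeasure hS]
  simp only [pow_zero, one_apply_eq_self]

end DirSeries

lemma mulVecE_eq_toEuclideanCLM {d : ℕ} (A : Matrix (Fin d) (Fin d) ℝ) :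
    mulVecE A = ⇑(Matrix.toEuclideanCLM (𝕜 := ℝ) A) :=
  rfl

lemma ae_norm_eq_one_of_measure_unitSphere {d : ℕ} {μ : Measure (Ed d)} [IsProbabilityMeasure μ]
    (hμ : μ (unitSphere d) = 1) : ∀ᵐ v ∂μ, ‖v‖ = 1 := by
  have := (ae_iff_measure_eq Metric.isClosed_sphere.measurableSet.nullMeasurableSet).mpr
    (hμ.trans measure_univ.symm)
  simpa [unitSphere] using this

lemma map_graph_apply_fst_preimage {X Y : Type*} [MeasurableSpace X] [MeasurableSpace Y]
    (ν : Measure X) {B : X → Y} (hB : Measurable B) {S : Set X} (hS : MeasurableSet S) :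
    (ν.map fun s => (s, B s)) (Prod.fst ⁻¹' S) = ν S :=
  Measure.map_apply (by fun_prop) (hS.preimage measurable_fst)

section Graph

variable {d : ℕ} {α : ℝ} {L : Ed d →L[ℝ] Ed d} {S : Set (Ed d)}

lemma dirMass_map_graph (ν : Measure (Ed d)) (hS : MeasurableSet S) :
    dirMass d α (ν.map fun s => (s, L s)) S = ∫⁻ s, dirWeight α S (L s) ∂ν :=
  lintegral_map ((measurable_dirWeight hS).comp measurable_snd) (by fun_prop)

lemma map_graph_smul_dirSeriesMeasure_apply_prod_univ (hα : α ≠ 0) {lam : Measure (Ed d)}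
    (hlam : ∀ᵐ v ∂lam, ‖v‖ = 1) (C : ℝ≥0∞) (hS : MeasurableSet S) :
    let P := (C • dirSeriesMeasure α L lam).map fun s => (s, L s)
    P (S ×ˢ univ) = C * lam S + dirMass d α P S := by
  intro P
  rw [prod_univ, map_graph_apply_fst_preimage _ L.measurable hS, dirMass_map_graph _ hS,
    Measure.smul_apply, lintegral_smul_measure, dirSeriesMeasure_apply_eq_add hα hS,
    lintegral_dirWeight_of_ae_norm_eq_one hlam hS, smul_eq_mul, smul_eq_mul, mul_add]

lemma IsAdjoint.apply_prod_zero_of_apply_prod_univ_eq_add {P Q : Measure (Ed d × Ed d)}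
    [IsFiniteMeasure P] (hQ : IsAdjoint d α P Q) {a : ℝ≥0∞} (hS : MeasurableSet S)
    (hSsub : S ⊆ unitSphere d) (h : P (S ×ˢ univ) = a + dirMass d α P S) :
    Q (S ×ˢ {0}) = a := by
  have hfin : dirMass d α P S ≠ ∞ := ne_top_of_le_ne_top (measure_ne_top P _) (h ▸ le_add_self)
  rw [hQ.eq_zero S hS hSsub, h, ENNReal.add_sub_cancel_right hfin]

end Graph

/-- Example 6.2 (heavy-tailed AR(1)): let `A` be a deterministic `d × d` matrix and
`λ` a probability measure on `S^{d-1}`; set `c n = ∫ ‖Aⁿ s‖^α λ(ds)` and assume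
`0 < Σ c n < ∞`.  Let `Υ` be the spectral measure defined by
`Υ(S) = (Σ c k)⁻¹ Σ_n ∫ 1_{Aⁿ s ≠ 0} 1_S(Aⁿ s / ‖Aⁿ s‖) ‖Aⁿ s‖^α λ(ds)`, let
`M₀ ∼ Υ`, `M₁ = A M₀`, and let `P` be the law of `(M₀, M₁)`.  Then `P ∈ M_α` and
`P*(S × {0}) = λ(S) / Σ c k` for every Borel `S ⊆ S^{d-1}`. -/
theorem ar1_example_adjoint_mass_at_zero
    {d : ℕ} {α : ℝ} (hα : 0 < α)
    (A : Matrix (Fin d) (Fin d) ℝ)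
    (lam : Measure (Ed d)) (hlamProb : IsProbabilityMeasure lam)
    (hlamSphere : lam (unitSphere d) = 1)
    (c : ℕ → ℝ≥0∞)
    (hc : ∀ n : ℕ, c n = ∫⁻ s, ENNReal.ofReal (‖mulVecE (A ^ n) s‖ ^ α) ∂lam)
    (hcpos : 0 < ∑' n : ℕ, c n) (hcfin : ∑' n : ℕ, c n < ∞)
    (Υ : Measure (Ed d))
    (hΥ : ∀ S : Set (Ed d), MeasurableSet S →
      Υ S = (∑' k : ℕ, c k)⁻¹ *
        ∑' n : ℕ, ∫⁻ s, Set.indicator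
          {s : Ed d | mulVecE (A ^ n) s ≠ 0 ∧
            ‖mulVecE (A ^ n) s‖⁻¹ • mulVecE (A ^ n) s ∈ S}
          (fun s => ENNReal.ofReal (‖mulVecE (A ^ n) s‖ ^ α)) s ∂lam) :
    MemMalpha d α (Υ.map fun s => (s, mulVecE A s)) ∧
    ∀ P' : Measure (Ed d × Ed d),
      IsAdjoint d α (Υ.map fun s => (s, mulVecE A s)) P' →
      ∀ S : Set (Ed d), MeasurableSet S → S ⊆ unitSphere d →
        P' (S ×ˢ ({0} : Set (Ed d))) = (∑' k : ℕ, c k)⁻¹ * lam S := by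
  simp only [mulVecE_eq_toEuclideanCLM, map_pow] at hc hΥ ⊢
  set L := Matrix.toEuclideanCLM (𝕜 := ℝ) A
  set C := ∑' k, c k
  have hΥ_eq : Υ = C⁻¹ • dirSeriesMeasure α L lam := Measure.ext fun S hS => by
    rw [hΥ S hS, Measure.smul_apply, smul_eq_mul, dirSeriesMeasure_apply hα.ne' hS]
    rfl
  have hΥ_prob : IsProbabilityMeasure Υ := by
    refine ⟨?_⟩
    rw [hΥ_eq, Measure.smul_apply, dirSeriesMeasure_univ hα.ne', ← tsum_congr hc, smul_eq_mul]
    exact ENNReal.inv_mul_cancel hcpos.ne' hcfin.ne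
  have hΥ_ae : ∀ᵐ v ∂Υ, ‖v‖ = 1 :=
    hΥ_eq ▸ Measure.ae_smul_measure (ae_norm_eq_one_dirSeriesMeasure hα.ne') _
  set P := Υ.map fun s => (s, L s)
  have hsplit (S : Set (Ed d)) (hS : MeasurableSet S) :
      P (S ×ˢ univ) = C⁻¹ * lam S + dirMass d α P S := by
    simp only [P, hΥ_eq]
    exact map_graph_smul_dirSeriesMeasure_apply_prod_univ hα.ne'
      (ae_norm_eq_one_of_measure_unitSphere hlamSphere) C⁻¹ hS
  have hnorm : MeasurableSet {v : Ed d | ‖v‖ = 1} := measurable_norm (measurableSet_singleton 1)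
  refine ⟨⟨Measure.isProbabilityMeasure_map (by fun_prop), ?_, fun S hS _ => ?_⟩,
    fun P' hP' S hS hSsub => hP'.apply_prod_zero_of_apply_prod_univ_eq_add hS hSsub (hsplit S hS)⟩
  · exact (map_graph_apply_fst_preimage Υ L.measurable hnorm).trans
      (((ae_iff_measure_eq hnorm.nullMeasurableSet).mp hΥ_ae).trans measure_univ)
  · exact (hsplit S hS).symm ▸ le_add_self
end
end
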